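/- arXiv:1506.04404 — 7 statements merged into one kernel-verified Lean document; each statement's English description precedes it below -/
import Mathlib

section
/- Let U be an open subset of X̂ = 𝔻_E × T. If N^L_∞(U) = U ∩ X_∞, then U is regular at ∞, i.e., N¹_∞(U) = U ∩ X_∞. -/
open Metric Filter

noncomputable section

/-- `ℂⁿ` with the Euclidean norm. -/
abbrev Cn (n : ℕ) := EuclideanSpace ℂ (Fin n)

/-- The radial compactification `𝔻_E` of `E = ℂⁿ`, as the disjoint union of `ℂⁿ`
and a copy `S^{2n-1}∞` of the unit sphere. -/
abbrev DE (n : ℕ) := Cn n ⊕ Metric.sphere (0 : Cn n) 1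

/-- The bijection `φ : D → 𝔻_E`, `φ(z) = z/(1-|z|)` on the open ball and `φ(z) = z∞`
on the boundary sphere. -/
noncomputable def phiD (n : ℕ) : Metric.closedBall (0 : Cn n) 1 → DE n :=
  fun z =>
    if h : ‖(z : Cn n)‖ < 1 then
      Sum.inl ((1 - ‖(z : Cn n)‖)⁻¹ • (z : Cn n))
    else
      Sum.inr ⟨(z : Cn n), by
        have h1 : ‖(z : Cn n)‖ ≤ 1 := mem_closedBall_zero_iff.mp z.2
        exact mem_sphere_zero_iff_norm.mpr (le_antisymm h1 (not_lt.mp h))⟩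

/-- The topology on `𝔻_E`, transported from the closed unit ball via `φ`
(so that `φ` is a homeomorphism). -/
instance DEtop (n : ℕ) : TopologicalSpace (DE n) :=
  TopologicalSpace.coinduced (phiD n) inferInstance

/-- The space of holomorphic parameters `T = ℂᵐ`. -/
abbrev Tm (m : ℕ) := EuclideanSpace ℂ (Fin m)

/-- The partial radial compactification `X̂ = 𝔻_E × T`. -/
abbrev Xhat (n m : ℕ) := DE n × Tm m

/-- The set at infinity `X_∞ = X̂ ∖ X`. -/
def Xinf (n m : ℕ) : Set (Xhat n m) := {p | ∃ x t, p = (Sum.inr x, t)}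

/-- The finite part `X = E × T` inside `X̂`. -/
def finiteX (n m : ℕ) : Set (Xhat n m) := {p | ∃ z t, p = (Sum.inl z, t)}

/-- `clos¹_∞(A)`: the set of points `(z∞, t) ∈ X_∞` which are limits of sequences
`(z_k, t_k) ∈ A ∩ X` with `|z_{k+1}|/|z_k| → 1`. -/
def closOneInf {n m : ℕ} (A : Set (Xhat n m)) : Set (Xhat n m) :=
  {p | p ∈ Xinf n m ∧ ∃ (z : ℕ → Cn n) (ts : ℕ → Tm m),
    (∀ k, ((Sum.inl (z k) : DE n), ts k) ∈ A) ∧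
    Tendsto (fun k => ((Sum.inl (z k) : DE n), ts k)) atTop (nhds p) ∧
    Tendsto (fun k => ‖z (k + 1)‖ / ‖z k‖) atTop (nhds 1)}

/-- `N¹_∞(A) := X_∞ ∖ clos¹_∞(X ∖ A)`. -/
def NOneInf {n m : ℕ} (A : Set (Xhat n m)) : Set (Xhat n m) :=
  Xinf n m \ closOneInf (finiteX n m \ A)

/-- An open subset `U ⊂ X̂` is regular at `∞` if `N¹_∞(U) = U ∩ X_∞`. -/
def RegularAtInf {n m : ℕ} (U : Set (Xhat n m)) : Prop :=
  NOneInf U = U ∩ Xinf n m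

/-- `N^L_∞(A)`: points `(ζ∞, t) ∈ X_∞` lying in the closure in `X̂` of
`(ℝ₊ζ × {t}) ∩ A`. -/
def NLInf {n m : ℕ} (A : Set (Xhat n m)) : Set (Xhat n m) :=
  {p | ∃ (ζ : Metric.sphere (0 : Cn n) 1) (t : Tm m), p = (Sum.inr ζ, t) ∧
    p ∈ closure ({q : Xhat n m | ∃ r : ℝ, 0 < r ∧
      q = (Sum.inl (r • (ζ : Cn n)), t)} ∩ A)}

/-! If `(ζ∞, t) ∉ U`, the hypothesis says `(ζ∞, t)` is not in the closure of the part of the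
ray `ℝ₊ζ × {t}` inside `U`, so the points `((k + 1)ζ, t)` eventually leave `U`. They converge
to `(ζ∞, t)` with `|z_{k+1}|/|z_k| → 1`, hence `(ζ∞, t) ∈ clos¹_∞(X ∖ U)`. Conversely
`clos¹_∞(X ∖ U)` lies in the closure of `X ∖ U`, which misses the open set `U`. -/

open Topology

lemma continuous_phiD (n : ℕ) : Continuous (phiD n) := continuous_coinduced_rng

lemma phiD_sphere {n : ℕ} (ζ : Metric.sphere (0 : Cn n) 1) :
    phiD n ⟨ζ, sphere_subset_closedBall ζ.2⟩ = Sum.inr ζ := by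
  simp [phiD, norm_eq_of_mem_sphere ζ]

def toBall {n : ℕ} (z : Cn n) : Metric.closedBall (0 : Cn n) 1 :=
  ⟨(1 + ‖z‖)⁻¹ • z, by
    rw [mem_closedBall_zero_iff, norm_smul, norm_inv, Real.norm_of_nonneg (by positivity),
      inv_mul_le_one₀ (by positivity)]
    linarith⟩

lemma norm_toBall {n : ℕ} (z : Cn n) : ‖(toBall z : Cn n)‖ = ‖z‖ / (1 + ‖z‖) := by
  rw [toBall, norm_smul, norm_inv, Real.norm_of_nonneg (by positivity), inv_mul_eq_div]

lemma phiD_toBall {n : ℕ} (z : Cn n) : phiD n (toBall z) = Sum.inl z := by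
  have hlt : ‖(toBall z : Cn n)‖ < 1 := by
    rw [norm_toBall, div_lt_one (by positivity)]
    linarith
  have hpos : (0 : ℝ) < 1 + ‖z‖ := by positivity
  rw [phiD, dif_pos hlt, norm_toBall]
  congr 1
  rw [toBall, smul_smul, one_sub_div hpos.ne', add_sub_cancel_right, inv_div, div_one,
    mul_inv_cancel₀ hpos.ne', one_smul]

lemma tendsto_inl_smul_atTop {n : ℕ} (ζ : Metric.sphere (0 : Cn n) 1) :
    Tendsto (fun r : ℝ => (Sum.inl (r • (ζ : Cn n)) : DE n)) atTop (𝓝 (Sum.inr ζ)) := by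
  have hball : Tendsto (fun r : ℝ => toBall (r • (ζ : Cn n))) atTop
      (𝓝 ⟨ζ, sphere_subset_closedBall ζ.2⟩) := by
    rw [tendsto_subtype_rng]
    have hinv : Tendsto (fun r : ℝ => (1 + r)⁻¹) atTop (𝓝 0) :=
      tendsto_inv_atTop_zero.comp (tendsto_atTop_add_const_left _ 1 tendsto_id)
    have hlim := (tendsto_const_nhds (x := (1 : ℝ)).sub hinv).smul_const (ζ : Cn n)
    rw [sub_zero, one_smul] at hlim
    refine hlim.congr' ?_
    filter_upwards [eventually_ge_atTop 0] with r hr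
    have hpos : (0 : ℝ) < 1 + r := by linarith
    change _ = (1 + ‖r • (ζ : Cn n)‖)⁻¹ • r • (ζ : Cn n)
    rw [norm_smul, norm_eq_of_mem_sphere ζ, mul_one, Real.norm_of_nonneg hr, smul_smul]
    congr 1
    field_simp
    ring
  simpa only [Function.comp_def, phiD_toBall, phiD_sphere] using
    ((continuous_phiD n).tendsto _).comp hball

/-- `ℝ₊ζ × {t}`. -/
def ray {n m : ℕ} (ζ : Metric.sphere (0 : Cn n) 1) (t : Tm m) : Set (Xhat n m) :=
  {q | ∃ r : ℝ, 0 < r ∧ q = (Sum.inl (r • (ζ : Cn n)), t)}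

lemma mem_NLInf_of_mem_closure {n m : ℕ} {A : Set (Xhat n m)} {ζ : Metric.sphere (0 : Cn n) 1}
    {t : Tm m} (h : ((Sum.inr ζ : DE n), t) ∈ closure (ray ζ t ∩ A)) :
    ((Sum.inr ζ : DE n), t) ∈ NLInf A :=
  ⟨ζ, t, rfl, h⟩

lemma closOneInf_subset_closure {n m : ℕ} (A : Set (Xhat n m)) : closOneInf A ⊆ closure A :=
  fun _ ⟨_, _, _, hA, hlim, _⟩ => mem_closure_of_tendsto hlim (Eventually.of_forall hA)

lemma mem_closOneInf_of_eventually {n m : ℕ} {A : Set (Xhat n m)} {p : Xhat n m}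
    (hp : p ∈ Xinf n m) {z : ℕ → Cn n} {ts : ℕ → Tm m}
    (hA : ∀ᶠ k in atTop, ((Sum.inl (z k) : DE n), ts k) ∈ A)
    (hlim : Tendsto (fun k => ((Sum.inl (z k) : DE n), ts k)) atTop (𝓝 p))
    (hratio : Tendsto (fun k => ‖z (k + 1)‖ / ‖z k‖) atTop (𝓝 1)) : p ∈ closOneInf A := by
  obtain ⟨N, hN⟩ := eventually_atTop.1 hA
  refine ⟨hp, fun k => z (k + N), fun k => ts (k + N), fun k => hN _ (Nat.le_add_left N k),
    (tendsto_add_atTop_iff_nat N).2 hlim, ?_⟩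
  refine ((tendsto_add_atTop_iff_nat N).2 hratio).congr fun k => ?_
  rw [Nat.add_right_comm]

lemma tendsto_norm_succ_div_norm_smul {n : ℕ} (ζ : Metric.sphere (0 : Cn n) 1) :
    Tendsto (fun k : ℕ =>
      ‖(((k + 1 : ℕ) : ℝ) + 1) • (ζ : Cn n)‖ / ‖((k : ℝ) + 1) • (ζ : Cn n)‖) atTop (𝓝 1) := by
  have hlim :=
    (tendsto_const_nhds (x := (1 : ℝ))).add (tendsto_one_div_add_atTop_nhds_zero_nat (𝕜 := ℝ))
  rw [add_zero] at hlim
  refine hlim.congr fun k => ?_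
  have hpos : (0 : ℝ) < k + 1 := by positivity
  rw [norm_smul, norm_smul, norm_eq_of_mem_sphere ζ, Real.norm_of_nonneg (by positivity),
    Real.norm_of_nonneg hpos.le]
  push_cast
  field_simp

lemma mem_closOneInf_diff_of_not_mem_closure {n m : ℕ} {A : Set (Xhat n m)}
    {ζ : Metric.sphere (0 : Cn n) 1} {t : Tm m}
    (h : ((Sum.inr ζ : DE n), t) ∉ closure (ray ζ t ∩ A)) :
    ((Sum.inr ζ : DE n), t) ∈ closOneInf (finiteX n m \ A) := by
  have hlim : Tendsto (fun k : ℕ => ((Sum.inl (((k : ℝ) + 1) • (ζ : Cn n)) : DE n), t)) atTop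
      (𝓝 ((Sum.inr ζ : DE n), t)) :=
    ((tendsto_inl_smul_atTop ζ).comp
      (tendsto_atTop_add_const_right _ 1 tendsto_natCast_atTop_atTop)).prodMk_nhds
      tendsto_const_nhds
  have hout :
      ∀ᶠ k : ℕ in atTop, ((Sum.inl (((k : ℝ) + 1) • (ζ : Cn n)) : DE n), t) ∉ A := by
    refine not_frequently.1 fun hfreq => h (mem_closure_of_frequently_of_tendsto ?_ hlim)
    exact hfreq.mono fun k hk => ⟨⟨(k : ℝ) + 1, by positivity, rfl⟩, hk⟩
  exact mem_closOneInf_of_eventually ⟨ζ, t, rfl⟩ (hout.mono fun k hk => ⟨⟨_, _, rfl⟩, hk⟩)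
    hlim (tendsto_norm_succ_div_norm_smul ζ)

/-- If an open `U ⊂ X̂` satisfies `N^L_∞(U) = U ∩ X_∞`, then `U` is regular at `∞`. -/
theorem regularAtInf_of_NLInf {n m : ℕ} (U : Set (Xhat n m)) (hU : IsOpen U)
    (h : NLInf U = U ∩ Xinf n m) : RegularAtInf U := by
  ext p
  constructor
  · rintro ⟨hp, hpcl⟩
    refine ⟨?_, hp⟩
    obtain ⟨ζ, t, rfl⟩ := hp
    by_contra hpU
    refine hpcl (mem_closOneInf_diff_of_not_mem_closure fun hcl => hpU ?_)
    exact (h ▸ mem_NLInf_of_mem_closure hcl).1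
  · rintro ⟨hpU, hp⟩
    refine ⟨hp, fun hcl => ?_⟩
    have hclosed : closure (finiteX n m \ U) ⊆ Uᶜ :=
      closure_minimal (fun _ hq => hq.2) hU.isClosed_compl
    exact hclosed (closOneInf_subset_closure _ hcl) hpU
end
end

section
/- The open set U := 𝔻_ℂ ∖ {1, 2, 3, 4, …, +∞} (removing all positive integers and the boundary point +∞ = (1)∞) satisfies N¹_∞(U) = S¹∞ ∖ {+∞}, hence U is regular at ∞. -/
open Metric Filter

noncomputable section

/-- The radial compactification `𝔻_ℂ = ℂ ⊔ S¹∞` of `ℂ`. -/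
abbrev DC := ℂ ⊕ Metric.sphere (0 : ℂ) 1

/-- The bijection from the closed unit disc to `𝔻_ℂ`: `z ↦ z/(1-|z|)` inside,
`z ↦ z∞` on the boundary circle. -/
noncomputable def phiDC : Metric.closedBall (0 : ℂ) 1 → DC :=
  fun z =>
    if h : ‖(z : ℂ)‖ < 1 then
      Sum.inl ((1 - ‖(z : ℂ)‖)⁻¹ • (z : ℂ))
    else
      Sum.inr ⟨(z : ℂ), by
        have h1 : ‖(z : ℂ)‖ ≤ 1 := mem_closedBall_zero_iff.mp z.2
        exact mem_sphere_zero_iff_norm.mpr (le_antisymm h1 (not_lt.mp h))⟩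

/-- The topology of `𝔻_ℂ`, transported from the closed unit disc via `phiDC`. -/
instance DCtop : TopologicalSpace DC :=
  TopologicalSpace.coinduced phiDC inferInstance

/-- The circle at infinity `S¹∞ ⊂ 𝔻_ℂ`. -/
def Sinf : Set DC := Set.range Sum.inr

/-- The point `+∞ = (1)∞ ∈ S¹∞`. -/
def plusInfty : DC := Sum.inr ⟨1, by simp⟩

/-- `clos¹_∞(A)` for `A ⊂ ℂ`: points `z∞ ∈ S¹∞` that are limits of sequences
`z_k ∈ A` with `|z_{k+1}|/|z_k| → 1`. -/
def closOneC (A : Set ℂ) : Set DC :=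
  {p | (∃ x : Metric.sphere (0 : ℂ) 1, p = Sum.inr x) ∧ ∃ z : ℕ → ℂ,
    (∀ k, z k ∈ A) ∧ Tendsto (fun k => (Sum.inl (z k) : DC)) atTop (nhds p) ∧
    Tendsto (fun k => ‖z (k + 1)‖ / ‖z k‖) atTop (nhds 1)}

/-- `N¹_∞(U) := S¹∞ ∖ clos¹_∞(ℂ ∖ U)` for `U ⊂ 𝔻_ℂ`. -/
def NOneC (U : Set DC) : Set DC :=
  Sinf \ closOneC {z : ℂ | (Sum.inl z : DC) ∉ U}

/-- The open set `U := 𝔻_ℂ ∖ {1, 2, 3, 4, …, +∞}`. -/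
def U7 : Set DC :=
  Set.univ \ ((Sum.inl '' {z : ℂ | ∃ k : ℕ, z = ((k + 1 : ℕ) : ℂ)}) ∪ {plusInfty})

/-! `phiDC` is a homeomorphism with inverse `z ↦ z/(1+|z|)`, `x∞ ↦ x`, so `z_k → x∞` in `𝔻_ℂ` means
`z_k/(1+|z_k|) → x` in `ℂ`. For positive integers `z_k` these quotients are positive reals, which
forces `x = 1`; conversely `z_k = k+1` tends to `+∞` with `|z_{k+1}|/|z_k| → 1`. Hence
`clos¹_∞(ℂ ∖ U) = {+∞}`. -/

open Topology

def psiDC : DC → closedBall (0 : ℂ) 1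
  | .inl z => ⟨(1 + ‖z‖)⁻¹ • z, by
      rw [mem_closedBall_zero_iff, norm_smul, norm_inv, Real.norm_of_nonneg (by positivity),
        inv_mul_le_iff₀ (by positivity)]
      linarith⟩
  | .inr x => ⟨x, sphere_subset_closedBall x.2⟩

lemma psiDC_phiDC (w : closedBall (0 : ℂ) 1) : psiDC (phiDC w) = w := by
  by_cases h : ‖(w : ℂ)‖ < 1
  · have hpos : 0 < 1 - ‖(w : ℂ)‖ := by linarith
    apply Subtype.ext
    simp only [phiDC, dif_pos h, psiDC]
    rw [norm_smul, norm_inv, Real.norm_of_nonneg hpos.le, smul_smul]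
    convert one_smul ℝ (w : ℂ)
    field_simp
    ring
  · simp only [phiDC, dif_neg h, psiDC]

lemma phiDC_psiDC (p : DC) : phiDC (psiDC p) = p := by
  rcases p with z | x
  · have hpos : 0 < 1 + ‖z‖ := by positivity
    have hnorm : ‖(1 + ‖z‖)⁻¹ • z‖ = (1 + ‖z‖)⁻¹ * ‖z‖ := by
      rw [norm_smul, norm_inv, Real.norm_of_nonneg hpos.le]
    have hlt : ‖(1 + ‖z‖)⁻¹ • z‖ < 1 := by
      rw [hnorm, inv_mul_lt_iff₀ hpos]
      linarith
    simp only [phiDC, psiDC, dif_pos hlt, hnorm, smul_smul]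
    congr
    convert one_smul ℝ z
    field_simp
    ring
  · have hx : ¬ ‖(psiDC (.inr x) : ℂ)‖ < 1 := by simp [psiDC]
    rw [phiDC, dif_neg hx]
    rfl

def homeomorphDC : closedBall (0 : ℂ) 1 ≃ₜ DC where
  toFun := phiDC
  invFun := psiDC
  left_inv := psiDC_phiDC
  right_inv := phiDC_psiDC
  continuous_toFun := continuous_coinduced_rng
  continuous_invFun := by
    rw [continuous_coinduced_dom]
    simpa only [Function.comp_def, psiDC_phiDC] using continuous_id'

lemma tendsto_inl_nhds_inr_iff {ι : Type*} {l : Filter ι} {z : ι → ℂ} {x : sphere (0 : ℂ) 1} :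
    Tendsto (fun k => (Sum.inl (z k) : DC)) l (𝓝 (Sum.inr x)) ↔
      Tendsto (fun k => (1 + ‖z k‖)⁻¹ • z k) l (𝓝 (x : ℂ)) :=
  (IsInducing.subtypeVal.comp homeomorphDC.symm.isInducing).tendsto_nhds_iff

open ComplexOrder in
lemma closOneC_subset_of_nonneg {A : Set ℂ} (hA : ∀ z ∈ A, 0 ≤ z) :
    closOneC A ⊆ {plusInfty} := by
  rintro _ ⟨⟨x, rfl⟩, z, hzA, hlim, -⟩
  have hx_nonneg : 0 ≤ (x : ℂ) :=
    ge_of_tendsto' (tendsto_inl_nhds_inr_iff.1 hlim) fun k =>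
      smul_nonneg (by positivity) (hA _ (hzA k))
  have hx : (x : ℂ) = 1 := by
    rw [Complex.eq_coe_norm_of_nonneg hx_nonneg, norm_eq_of_mem_sphere, Complex.ofReal_one]
  exact congrArg Sum.inr (Subtype.ext hx)

lemma plusInfty_mem_closOneC_posNat :
    plusInfty ∈ closOneC {z : ℂ | ∃ k : ℕ, z = ((k + 1 : ℕ) : ℂ)} := by
  refine ⟨⟨_, rfl⟩, fun k => ((k + 1 : ℕ) : ℂ), fun k => ⟨k, rfl⟩, ?_, ?_⟩
  · rw [plusInfty, tendsto_inl_nhds_inr_iff]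
    convert tendsto_add_mul_div_add_mul_atTop_nhds (1 : ℂ) 2 1 one_ne_zero using 2 with k
    · rw [Complex.norm_natCast, Complex.real_smul]
      push_cast
      field_simp
      ring
    · simp
  · convert tendsto_add_mul_div_add_mul_atTop_nhds (2 : ℝ) 1 1 one_ne_zero using 2 with k
    · simp only [Complex.norm_natCast]
      push_cast
      ring
    · simp

lemma setOf_inl_notMem_U7 :
    {z : ℂ | (Sum.inl z : DC) ∉ U7} = {z : ℂ | ∃ k : ℕ, z = ((k + 1 : ℕ) : ℂ)} := by
  ext z
  simp [U7, plusInfty]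

open ComplexOrder in
lemma closOneC_compl_U7 : closOneC {z : ℂ | (Sum.inl z : DC) ∉ U7} = {plusInfty} := by
  rw [setOf_inl_notMem_U7]
  refine (closOneC_subset_of_nonneg ?_).antisymm
    (Set.singleton_subset_iff.2 plusInfty_mem_closOneC_posNat)
  rintro _ ⟨k, rfl⟩
  exact Nat.cast_nonneg _

lemma U7_inter_Sinf : U7 ∩ Sinf = Sinf \ {plusInfty} := by
  ext p
  rcases p with z | x <;> simp [U7, Sinf]

/-- `N¹_∞(U7) = S¹∞ ∖ {+∞}`; hence `U7` is regular at `∞`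
(`N¹_∞(U7) = U7 ∩ S¹∞`). -/
theorem U7_regular : NOneC U7 = Sinf \ {plusInfty} ∧ NOneC U7 = U7 ∩ Sinf := by
  have hN : NOneC U7 = Sinf \ {plusInfty} := by rw [NOneC, closOneC_compl_U7]
  exact ⟨hN, hN.trans U7_inter_Sinf.symm⟩
end
end

section
/- The open set U := 𝔻_ℂ ∖ {1, 2, 4, 8, 16, …, +∞} (removing all powers of 2 and the point +∞) satisfies N¹_∞(U) = S¹∞; in particular, since +∞ ∉ U, U is not regular at ∞. -/
open Metric Filter

noncomputable section

/-- The open set `U := 𝔻_ℂ ∖ {1, 2, 4, 8, 16, …, +∞}`. -/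
def U8 : Set DC :=
  Set.univ \ ((Sum.inl '' {z : ℂ | ∃ k : ℕ, z = ((2 ^ k : ℕ) : ℂ)}) ∪ {plusInfty})

/-!
Along a sequence of powers of two, two consecutive terms are either equal or differ by a
factor of at least 2, so the condition `|z_{k+1}|/|z_k| → 1` forces the sequence to be
eventually constant. An eventually constant sequence of `ℂ` cannot converge to a point of
`S¹∞`, since points of `ℂ` are closed in `𝔻_ℂ`. Hence `clos¹_∞(ℂ ∖ U)` is empty.
-/

lemma phiDC_eq_inl {z : Metric.closedBall (0 : ℂ) 1} {c : ℂ} (h : phiDC z = Sum.inl c) :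
    (z : ℂ) = (1 + ‖c‖)⁻¹ • c := by
  unfold phiDC at h
  split_ifs at h with hz
  have hc : (1 - ‖(z : ℂ)‖)⁻¹ • (z : ℂ) = c := Sum.inl.inj h
  have hpos : (0 : ℝ) < 1 - ‖(z : ℂ)‖ := by linarith
  have hzc : (z : ℂ) = (1 - ‖(z : ℂ)‖) • c := by
    rw [← hc, smul_smul, mul_inv_cancel₀ hpos.ne', one_smul]
  have hnorm : ‖(z : ℂ)‖ = (1 - ‖(z : ℂ)‖) * ‖c‖ := by
    conv_lhs => rw [hzc]
    rw [norm_smul, Real.norm_of_nonneg hpos.le]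
  have hscale : 1 - ‖(z : ℂ)‖ = (1 + ‖c‖)⁻¹ :=
    eq_inv_of_mul_eq_one_left (by linarith)
  rw [hzc, hscale]

lemma isOpen_compl_singleton_inl (c : ℂ) : IsOpen ({Sum.inl c}ᶜ : Set DC) := by
  rw [DCtop, isOpen_coinduced, Set.preimage_compl, isOpen_compl_iff]
  refine Set.Subsingleton.isClosed fun a ha b hb => Subtype.ext ?_
  exact (phiDC_eq_inl ha).trans (phiDC_eq_inl hb).symm

lemma not_tendsto_inl_inr_of_eventuallyConst {z : ℕ → ℂ} (hz : EventuallyConst z atTop)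
    (x : Metric.sphere (0 : ℂ) 1) :
    ¬ Tendsto (fun k => (Sum.inl (z k) : DC)) atTop (nhds (Sum.inr x)) := by
  intro hlim
  obtain ⟨c, hzc⟩ := eventuallyConst_iff_exists_eventuallyEq.mp hz
  have hconst : Tendsto (fun _ : ℕ => (Sum.inl c : DC)) atTop (nhds (Sum.inr x)) :=
    hlim.congr' (hzc.mono fun k hk => by rw [hk])
  obtain ⟨_, hk⟩ := (hconst.eventually_mem
    ((isOpen_compl_singleton_inl c).mem_nhds (by simp))).exists
  exact hk rfl

lemma eq_of_dist_two_pow_div_two_pow_lt {m n : ℕ}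
    (h : dist ((2 : ℝ) ^ m / 2 ^ n) 1 < 1 / 2) : m = n := by
  rw [← zpow_natCast, ← zpow_natCast, ← zpow_sub₀ two_ne_zero, Real.dist_eq, abs_lt] at h
  by_contra hne
  rcases lt_or_gt_of_ne hne with hlt | hgt
  · have : (2 : ℝ) ^ ((m : ℤ) - n) ≤ 2 ^ (-1 : ℤ) := zpow_le_zpow_right₀ one_le_two (by omega)
    norm_num at this
    linarith
  · have : (2 : ℝ) ^ (1 : ℤ) ≤ 2 ^ ((m : ℤ) - n) := zpow_le_zpow_right₀ one_le_two (by omega)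
    norm_num at this
    linarith

lemma eventuallyConst_of_tendsto_two_pow_ratio {u : ℕ → ℕ}
    (h : Tendsto (fun k => (2 : ℝ) ^ u (k + 1) / 2 ^ u k) atTop (nhds 1)) :
    EventuallyConst u atTop :=
  eventuallyConst_atTop_nat.mpr <| eventually_atTop.mp <|
    (h.eventually (Metric.ball_mem_nhds 1 one_half_pos)).mono
      fun _ hk => eq_of_dist_two_pow_div_two_pow_lt hk

lemma closOneC_eq_empty_of_subset_powers_two {A : Set ℂ}
    (hA : A ⊆ Set.range fun k : ℕ => ((2 ^ k : ℕ) : ℂ)) : closOneC A = ∅ := by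
  refine Set.eq_empty_of_forall_notMem ?_
  rintro p ⟨⟨x, rfl⟩, z, hzA, hlim, hratio⟩
  choose u hu using fun k => hA (hzA k)
  obtain rfl : (fun k => ((2 ^ u k : ℕ) : ℂ)) = z := funext hu
  simp only [Nat.cast_pow, Nat.cast_ofNat, norm_pow, Complex.norm_ofNat] at hratio
  exact not_tendsto_inl_inr_of_eventuallyConst
    ((eventuallyConst_of_tendsto_two_pow_ratio hratio).comp fun n => ((2 ^ n : ℕ) : ℂ)) x hlim

lemma setOf_inl_notMem_U8_subset :
    {z : ℂ | (Sum.inl z : DC) ∉ U8} ⊆ Set.range fun k : ℕ => ((2 ^ k : ℕ) : ℂ) := by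
  intro z hz
  simp only [U8, Set.mem_ofPred_eq, Set.mem_sdiff, Set.mem_univ, true_and, not_not,
    Set.mem_union, Set.mem_image, Set.mem_singleton_iff, plusInfty, reduceCtorEq,
    or_false, Sum.inl.injEq] at hz
  obtain ⟨w, ⟨k, rfl⟩, rfl⟩ := hz
  exact ⟨k, rfl⟩

/-- `N¹_∞(U8) = S¹∞`; in particular, since `+∞ ∉ U8`, `U8` is not regular at `∞`
(`N¹_∞(U8) ≠ U8 ∩ S¹∞`). -/
theorem U8_not_regular : NOneC U8 = Sinf ∧ NOneC U8 ≠ U8 ∩ Sinf := by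
  have hN : NOneC U8 = Sinf := by
    rw [NOneC, closOneC_eq_empty_of_subset_powers_two setOf_inl_notMem_U8_subset,
      Set.sdiff_empty]
  refine ⟨hN, fun h => ?_⟩
  have hplus : plusInfty ∈ U8 ∩ Sinf := h ▸ hN ▸ ⟨_, rfl⟩
  exact hplus.1.2 (Or.inr rfl)
end
end

section
/- Let M be a module over a commutative ring, and let φ₁, …, φ_p be commuting endomorphisms of M. Let 𝓜 be the Koszul complex associated to the sequence (φ₁, …, φ_p). If for each 1 ≤ j ≤ p the endomorphism induced by φ_j on M / (φ₁(M) + ⋯ + φ_{j-1}(M)) is injective, then H^j(𝓜) = 0 for j ≠ p and H^p(𝓜) ≅ M / (φ₁(M) + ⋯ + φ_p(M)). -/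
noncomputable section

/-- The sign of `j` relative to `J`: `(-1)^(number of elements of J below j)`,
corresponding to `e_j ∧ e_J` in the exterior algebra `Λ(ℤ^p)`. -/
def koszulSign {p : ℕ} (J : Finset (Fin p)) (j : Fin p) : ℤ :=
  (-1) ^ (J.filter (fun i => i < j)).card

/-- The Koszul differential associated to a family `φ` of commuting endomorphisms,
in the concrete model where the degree-`k` term `M ⊗ Λ^k(ℤ^p)` is realized as the
module of `M`-valued functions on `k`-element subsets of `{1,…,p}`. -/
def koszulD {R : Type*} [CommRing R] {M : Type*} [AddCommGroup M] [Module R M]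
    {p : ℕ} (φ : Fin p → M →ₗ[R] M) {k : ℕ}
    (f : {J : Finset (Fin p) // J.card = k} → M) :
    {J : Finset (Fin p) // J.card = k + 1} → M :=
  fun J => ∑ j ∈ (J : Finset (Fin p)).attach,
    koszulSign (J : Finset (Fin p)) j.1 •
      φ j.1 (f ⟨(J : Finset (Fin p)).erase j.1, by
        simp [Finset.card_erase_of_mem j.2, J.2]⟩)

namespace KoszulAux

open Finset

theorem erase_card_aux {p k : ℕ} {J : Finset (Fin p)} {j : Fin p}
    (h : j ∈ J) (h2 : J.card = k + 1) : (J.erase j).card = k := by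
  rw [Finset.card_erase_of_mem h, h2]; omega

variable {R : Type*} [CommRing R] {M : Type*} [AddCommGroup M] [Module R M]

theorem koszulD_apply {p k : ℕ} (φ : Fin p → M →ₗ[R] M)
    (f : {J : Finset (Fin p) // J.card = k} → M)
    (J : {J : Finset (Fin p) // J.card = k + 1}) :
    koszulD φ f J = ∑ j : Fin p, if h : j ∈ J.1 then
      koszulSign J.1 j • φ j (f ⟨J.1.erase j, erase_card_aux h J.2⟩) else 0 := by
  classical
  have h1 : koszulD φ f J = ∑ j ∈ J.1.attach, (fun j : Fin p => if h : j ∈ J.1 then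
      koszulSign J.1 j • φ j (f ⟨J.1.erase j, erase_card_aux h J.2⟩) else 0) j.1 := by
    unfold koszulD
    refine Finset.sum_congr rfl ?_
    rintro ⟨j, hj⟩ -
    simp only [dif_pos hj]
  rw [h1, Finset.sum_attach J.1 (fun j : Fin p => if h : j ∈ J.1 then
      koszulSign J.1 j • φ j (f ⟨J.1.erase j, erase_card_aux h J.2⟩) else 0)]
  refine Finset.sum_subset (Finset.subset_univ _) fun j _ hj => dif_neg hj

theorem koszulD_sub {p k : ℕ} (φ : Fin p → M →ₗ[R] M)
    (f g : {J : Finset (Fin p) // J.card = k} → M) :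
    koszulD φ (f - g) = koszulD φ f - koszulD φ g := by
  funext J
  simp [koszulD, smul_sub, Finset.sum_sub_distrib]

theorem koszulD_zsmul {p k : ℕ} (φ : Fin p → M →ₗ[R] M) (m : ℤ)
    (f : {J : Finset (Fin p) // J.card = k} → M) :
    koszulD φ (m • f) = m • koszulD φ f := by
  funext J
  simp [koszulD, Finset.smul_sum, smul_comm m]

theorem koszulD_comp {p k : ℕ} (φ : Fin p → M →ₗ[R] M) (ψ : M →ₗ[R] M)
    (hψ : ∀ i, ψ ∘ₗ (φ i) = (φ i) ∘ₗ ψ)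
    (f : {J : Finset (Fin p) // J.card = k} → M) :
    koszulD φ (fun J => ψ (f J)) = fun J => ψ (koszulD φ f J) := by
  funext J
  simp only [koszulD, map_sum, map_zsmul]
  refine Finset.sum_congr rfl fun j _ => ?_
  congr 1
  exact (LinearMap.congr_fun (hψ j.1) (f _)).symm

theorem koszulD_mem_iSup {p k : ℕ} (φ : Fin p → M →ₗ[R] M)
    (g : {J : Finset (Fin p) // J.card = k} → M)
    (J : {J : Finset (Fin p) // J.card = k + 1}) :
    koszulD φ g J ∈ ⨆ i : Fin p, LinearMap.range (φ i) := by
  rw [koszulD_apply]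
  refine Submodule.sum_mem _ fun j _ => ?_
  by_cases h : j ∈ J.1
  · rw [dif_pos h]
    exact zsmul_mem (le_iSup (fun i => LinearMap.range (φ i)) j ⟨_, rfl⟩) _
  · rw [dif_neg h]
    exact Submodule.zero_mem _

end KoszulAux

namespace KoszulAux

open Finset

variable {q : ℕ}

/-- Lift a subset of `Fin q` to `Fin (q+1)` via `castSucc`. -/
def cs (K : Finset (Fin q)) : Finset (Fin (q + 1)) := K.map Fin.castSuccEmb

theorem mem_cs {K : Finset (Fin q)} {j : Fin q} : j.castSucc ∈ cs K ↔ j ∈ K :=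
  Finset.mem_map' _

theorem last_notMem_cs {K : Finset (Fin q)} : Fin.last q ∉ cs K := by
  simp only [cs, Finset.mem_map]
  rintro ⟨i, -, hi⟩
  exact (Fin.castSucc_lt_last i).ne hi

theorem card_cs (K : Finset (Fin q)) : (cs K).card = K.card := Finset.card_map _

theorem cs_erase (K : Finset (Fin q)) (j : Fin q) :
    cs (K.erase j) = (cs K).erase j.castSucc := Finset.map_erase _ _ _

theorem filter_cs (K : Finset (Fin q)) (j : Fin q) :
    (cs K).filter (fun i => i < j.castSucc) = cs (K.filter (fun i => i < j)) := by
  ext a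
  induction a using Fin.lastCases with
  | last => simp [Finset.mem_filter, last_notMem_cs]
  | cast i => simp [Finset.mem_filter, mem_cs, Fin.castSucc_lt_castSucc_iff]

theorem sign_cs (K : Finset (Fin q)) (j : Fin q) :
    koszulSign (cs K) j.castSucc = koszulSign K j := by
  unfold koszulSign
  rw [filter_cs, card_cs]

theorem filter_insert_last (K : Finset (Fin q)) (j : Fin q) :
    (insert (Fin.last q) (cs K)).filter (fun i => i < j.castSucc)
      = (cs K).filter (fun i => i < j.castSucc) := by
  rw [Finset.filter_insert, if_neg]
  exact fun h => absurd (h.trans (Fin.castSucc_lt_last j)) (lt_irrefl _)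

theorem sign_insert_last_cs (K : Finset (Fin q)) (j : Fin q) :
    koszulSign (insert (Fin.last q) (cs K)) j.castSucc = koszulSign K j := by
  unfold koszulSign
  rw [filter_insert_last, filter_cs, card_cs]

theorem sign_insert_last (K : Finset (Fin q)) :
    koszulSign (insert (Fin.last q) (cs K)) (Fin.last q) = (-1) ^ K.card := by
  unfold koszulSign
  congr 1
  rw [Finset.filter_insert, if_neg (lt_irrefl _), Finset.filter_true_of_mem, card_cs]
  intro a ha
  simp only [cs, Finset.mem_map] at ha
  obtain ⟨i, -, rfl⟩ := ha
  exact Fin.castSucc_lt_last i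

def unlift (J : Finset (Fin (q + 1))) : Finset (Fin q) :=
  J.preimage Fin.castSucc ((Fin.castSucc_injective q).injOn)

theorem mem_unlift {J : Finset (Fin (q + 1))} {i : Fin q} :
    i ∈ unlift J ↔ i.castSucc ∈ J := Finset.mem_preimage

theorem unlift_cs (K : Finset (Fin q)) : unlift (cs K) = K := by
  ext i; rw [mem_unlift, mem_cs]

theorem unlift_insert_last (J : Finset (Fin (q + 1))) :
    unlift (insert (Fin.last q) J) = unlift J := by
  ext i
  rw [mem_unlift, mem_unlift, Finset.mem_insert]
  simp [(Fin.castSucc_lt_last i).ne]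

theorem cs_unlift {J : Finset (Fin (q + 1))} (h : Fin.last q ∉ J) :
    cs (unlift J) = J := by
  ext a
  induction a using Fin.lastCases with
  | last => simp [last_notMem_cs, h]
  | cast i => rw [mem_cs, mem_unlift]

theorem eq_insert_of_mem {J : Finset (Fin (q + 1))} (h : Fin.last q ∈ J) :
    J = insert (Fin.last q) (cs (unlift J)) := by
  have h2 : Fin.last q ∉ J.erase (Fin.last q) := Finset.notMem_erase _ _
  have h3 : unlift (J.erase (Fin.last q)) = unlift J := by
    ext i
    rw [mem_unlift, mem_unlift, Finset.mem_erase]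
    simp [(Fin.castSucc_lt_last i).ne]
  rw [← h3, cs_unlift h2, Finset.insert_erase h]

theorem card_unlift_of_notMem {J : Finset (Fin (q + 1))} (h : Fin.last q ∉ J) :
    (unlift J).card = J.card := by
  conv_rhs => rw [← cs_unlift h]
  exact (card_cs _).symm

theorem card_unlift_of_mem {J : Finset (Fin (q + 1))} (h : Fin.last q ∈ J) :
    (unlift J).card + 1 = J.card := by
  conv_rhs => rw [eq_insert_of_mem h]
  rw [Finset.card_insert_of_notMem last_notMem_cs, card_cs]

theorem insert_last_cs_univ : insert (Fin.last q) (cs (univ : Finset (Fin q))) = univ := by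
  apply Finset.eq_univ_of_forall
  intro a
  induction a using Fin.lastCases with
  | last => exact Finset.mem_insert_self _ _
  | cast i => exact Finset.mem_insert_of_mem (mem_cs.mpr (Finset.mem_univ i))

end KoszulAux

namespace KoszulAux

open Finset

variable {R : Type*} [CommRing R] {M : Type*} [AddCommGroup M] [Module R M] {q : ℕ}

def res0 {k : ℕ} (f : {J : Finset (Fin (q + 1)) // J.card = k} → M) :
    {K : Finset (Fin q) // K.card = k} → M :=
  fun K => f ⟨cs K.1, by rw [card_cs, K.2]⟩

def res1 {k : ℕ} (f : {J : Finset (Fin (q + 1)) // J.card = k + 1} → M) :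
    {K : Finset (Fin q) // K.card = k} → M :=
  fun K => f ⟨insert (Fin.last q) (cs K.1), by
    rw [Finset.card_insert_of_notMem last_notMem_cs, card_cs, K.2]⟩

theorem res0_zero {k : ℕ} : res0 (0 : {J : Finset (Fin (q + 1)) // J.card = k} → M) = 0 := rfl

theorem res1_zero {k : ℕ} : res1 (0 : {J : Finset (Fin (q + 1)) // J.card = k + 1} → M) = 0 := rfl

theorem res_ext {k : ℕ} {f g : {J : Finset (Fin (q + 1)) // J.card = k + 1} → M}
    (h0 : res0 f = res0 g) (h1 : res1 f = res1 g) : f = g := by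
  funext ⟨J, hJ⟩
  by_cases h : Fin.last q ∈ J
  · have hc : (unlift J).card = k := by have := card_unlift_of_mem h; omega
    rw [show (⟨J, hJ⟩ : {J : Finset (Fin (q + 1)) // J.card = k + 1})
        = ⟨insert (Fin.last q) (cs (unlift J)), by
          rw [Finset.card_insert_of_notMem last_notMem_cs, card_cs, hc]⟩
      from Subtype.ext (eq_insert_of_mem h)]
    exact congrFun h1 ⟨unlift J, hc⟩
  · have hc : (unlift J).card = k + 1 := by rw [card_unlift_of_notMem h, hJ]
    rw [show (⟨J, hJ⟩ : {J : Finset (Fin (q + 1)) // J.card = k + 1})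
        = ⟨cs (unlift J), by rw [card_cs, hc]⟩
      from Subtype.ext (cs_unlift h).symm]
    exact congrFun h0 ⟨unlift J, hc⟩

theorem res0_koszulD {k : ℕ} (φ : Fin (q + 1) → M →ₗ[R] M)
    (f : {J : Finset (Fin (q + 1)) // J.card = k} → M) :
    res0 (koszulD φ f) = koszulD (fun i : Fin q => φ i.castSucc) (res0 f) := by
  funext ⟨K, hK⟩
  rw [show res0 (koszulD φ f) ⟨K, hK⟩
      = koszulD φ f ⟨cs K, by rw [card_cs, hK]⟩ from rfl]
  rw [koszulD_apply, koszulD_apply, Fin.sum_univ_castSucc]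
  rw [dif_neg (show Fin.last q ∉ cs K from last_notMem_cs), add_zero]
  refine Finset.sum_congr rfl fun j _ => ?_
  by_cases hj : j ∈ K
  · rw [dif_pos (show j.castSucc ∈ cs K from mem_cs.mpr hj), dif_pos hj, sign_cs]
    congr 1
    exact congrArg (φ j.castSucc) (congrArg f (Subtype.ext (cs_erase K j).symm))
  · rw [dif_neg (show j.castSucc ∉ cs K from fun hh => hj (mem_cs.mp hh)), dif_neg hj]

theorem res1_koszulD {k : ℕ} (φ : Fin (q + 1) → M →ₗ[R] M)
    (f : {J : Finset (Fin (q + 1)) // J.card = k + 1} → M) :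
    res1 (koszulD φ f) = koszulD (fun i : Fin q => φ i.castSucc) (res1 f)
      + fun K => ((-1 : ℤ) ^ (k + 1)) • φ (Fin.last q) (res0 f K) := by
  funext ⟨K, hK⟩
  rw [show res1 (koszulD φ f) ⟨K, hK⟩
      = koszulD φ f ⟨insert (Fin.last q) (cs K), by
          rw [Finset.card_insert_of_notMem last_notMem_cs, card_cs, hK]⟩ from rfl]
  rw [koszulD_apply, Pi.add_apply, koszulD_apply, Fin.sum_univ_castSucc]
  congr 1
  · refine Finset.sum_congr rfl fun j _ => ?_
    by_cases hj : j ∈ K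
    · rw [dif_pos (show j.castSucc ∈ insert (Fin.last q) (cs K) from
          Finset.mem_insert_of_mem (mem_cs.mpr hj)), dif_pos hj, sign_insert_last_cs]
      congr 1
      refine congrArg (φ j.castSucc) (congrArg f (Subtype.ext ?_))
      show (insert (Fin.last q) (cs K)).erase j.castSucc = insert (Fin.last q) (cs (K.erase j))
      rw [Finset.erase_insert_of_ne (Fin.castSucc_lt_last j).ne', ← cs_erase]
    · rw [dif_neg, dif_neg hj]
      rw [Finset.mem_insert]
      push_neg
      exact ⟨(Fin.castSucc_lt_last j).ne, fun hh => hj (mem_cs.mp hh)⟩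
  · rw [dif_pos (Finset.mem_insert_self _ _), sign_insert_last]
    congr 1
    · rw [hK]
    · refine congrArg (φ (Fin.last q)) (congrArg f (Subtype.ext ?_))
      show (insert (Fin.last q) (cs K)).erase (Fin.last q) = cs K
      exact Finset.erase_insert last_notMem_cs

theorem res1_koszulD_zero (φ : Fin (q + 1) → M →ₗ[R] M)
    (f : {J : Finset (Fin (q + 1)) // J.card = 0} → M) :
    res1 (koszulD φ f) = fun K => φ (Fin.last q) (res0 f K) := by
  funext ⟨K, hK⟩
  obtain rfl : K = ∅ := Finset.card_eq_zero.mp hK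
  rw [show res1 (koszulD φ f) ⟨∅, hK⟩
      = koszulD φ f ⟨insert (Fin.last q) (cs ∅), by
          rw [Finset.card_insert_of_notMem last_notMem_cs, card_cs, hK]⟩ from rfl]
  rw [koszulD_apply, Fin.sum_univ_castSucc]
  have hcs : cs (∅ : Finset (Fin q)) = ∅ := Finset.map_empty _
  have hmem : ∀ j : Fin q, j.castSucc ∉ insert (Fin.last q) (cs (∅ : Finset (Fin q))) := by
    intro j
    rw [Finset.mem_insert, hcs]
    push_neg
    exact ⟨(Fin.castSucc_lt_last j).ne, Finset.notMem_empty _⟩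
  rw [Finset.sum_eq_zero (fun j _ => dif_neg (hmem j)), zero_add,
    dif_pos (Finset.mem_insert_self _ _), sign_insert_last]
  have hone : ((-1 : ℤ)) ^ (∅ : Finset (Fin q)).card = 1 := by simp
  rw [hone, one_smul]
  refine congrArg (φ (Fin.last q)) (congrArg f (Subtype.ext ?_))
  show (insert (Fin.last q) (cs ∅)).erase (Fin.last q) = cs ∅
  exact Finset.erase_insert last_notMem_cs

def glue {k : ℕ} (g₀ : {K : Finset (Fin q) // K.card = k + 1} → M)
    (g₁ : {K : Finset (Fin q) // K.card = k} → M) :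
    {J : Finset (Fin (q + 1)) // J.card = k + 1} → M :=
  fun J => if h : Fin.last q ∈ J.1 then
    g₁ ⟨unlift J.1, by have := card_unlift_of_mem h; rw [J.2] at this; omega⟩
  else
    g₀ ⟨unlift J.1, by rw [card_unlift_of_notMem h, J.2]⟩

theorem res0_glue {k : ℕ} (g₀ : {K : Finset (Fin q) // K.card = k + 1} → M)
    (g₁ : {K : Finset (Fin q) // K.card = k} → M) : res0 (glue g₀ g₁) = g₀ := by
  funext ⟨K, hK⟩
  rw [show res0 (glue g₀ g₁) ⟨K, hK⟩ = glue g₀ g₁ ⟨cs K, by rw [card_cs, hK]⟩ from rfl,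
    glue, dif_neg (show Fin.last q ∉ cs K from last_notMem_cs)]
  exact congrArg g₀ (Subtype.ext (unlift_cs K))

theorem res1_glue {k : ℕ} (g₀ : {K : Finset (Fin q) // K.card = k + 1} → M)
    (g₁ : {K : Finset (Fin q) // K.card = k} → M) : res1 (glue g₀ g₁) = g₁ := by
  funext ⟨K, hK⟩
  rw [show res1 (glue g₀ g₁) ⟨K, hK⟩ = glue g₀ g₁ ⟨insert (Fin.last q) (cs K), by
      rw [Finset.card_insert_of_notMem last_notMem_cs, card_cs, hK]⟩ from rfl,
    glue, dif_pos (Finset.mem_insert_self _ _)]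
  refine congrArg g₁ (Subtype.ext ?_)
  show unlift (insert (Fin.last q) (cs K)) = K
  rw [unlift_insert_last, unlift_cs]

end KoszulAux

namespace KoszulAux

open Finset

variable {R : Type*} [CommRing R] {M : Type*} [AddCommGroup M] [Module R M]

theorem main : ∀ (q : ℕ) (φ : Fin (q + 1) → M →ₗ[R] M),
    (∀ i j, (φ i) ∘ₗ (φ j) = (φ j) ∘ₗ (φ i)) →
    (∀ j : Fin (q + 1), ∀ x : M,
      φ j x ∈ (⨆ i : {i : Fin (q + 1) // i < j}, LinearMap.range (φ i.1)) →
      x ∈ ⨆ i : {i : Fin (q + 1) // i < j}, LinearMap.range (φ i.1)) →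
    (∀ f : {J : Finset (Fin (q + 1)) // J.card = 0} → M,
      koszulD φ f = 0 → f = 0) ∧
    (∀ k : ℕ, k + 1 < q + 1 →
      ∀ f : {J : Finset (Fin (q + 1)) // J.card = k + 1} → M,
        koszulD φ f = 0 → ∃ g, koszulD φ g = f) ∧
    (∀ f : {J : Finset (Fin (q + 1)) // J.card = q + 1} → M,
      (∃ g : {J : Finset (Fin (q + 1)) // J.card = q} → M, koszulD φ g = f) ↔
        f ⟨Finset.univ, by simp⟩ ∈ ⨆ i : Fin (q + 1), LinearMap.range (φ i)) := by
  intro q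
  induction q with
  | zero =>
    intro φ hcomm hinj
    have hempty : IsEmpty {i : Fin 1 // i < (0 : Fin 1)} :=
      ⟨fun i => Fin.not_lt_zero _ i.2⟩
    refine ⟨?_, fun k hk => absurd hk (by omega), ?_⟩
    · intro f hf
      have h1 : koszulD φ f ⟨{0}, by simp⟩ = 0 := by rw [hf]; rfl
      rw [koszulD_apply, Fin.sum_univ_one,
        dif_pos (Finset.mem_singleton_self (0 : Fin 1))] at h1
      have hsign : koszulSign ({0} : Finset (Fin 1)) 0 = 1 := by
        simp [koszulSign, Fin.not_lt_zero]
      rw [hsign, one_smul] at h1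
      have h2 := hinj 0 _ (by rw [h1]; exact Submodule.zero_mem _)
      haveI := hempty
      rw [iSup_of_empty] at h2
      funext ⟨J, hJ⟩
      obtain rfl : J = ∅ := Finset.card_eq_zero.mp hJ
      show f ⟨∅, hJ⟩ = 0
      rw [show (⟨∅, hJ⟩ : {J : Finset (Fin 1) // J.card = 0})
          = ⟨({0} : Finset (Fin 1)).erase 0, by simp⟩ from
        Subtype.ext (Finset.erase_singleton 0).symm]
      exact (Submodule.mem_bot _).mp h2
    · intro f
      constructor
      · rintro ⟨g, rfl⟩
        exact koszulD_mem_iSup φ g _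
      · intro hf
        have huniq : (⨆ i : Fin 1, LinearMap.range (φ i)) = LinearMap.range (φ 0) :=
          le_antisymm (iSup_le fun i => by rw [Subsingleton.elim i 0]) (le_iSup (fun i : Fin 1 => LinearMap.range (φ i)) 0)
        rw [huniq] at hf
        obtain ⟨x, hx⟩ := hf
        refine ⟨fun _ => x, ?_⟩
        funext ⟨J, hJ⟩
        obtain rfl : J = univ := (Finset.card_eq_iff_eq_univ J).mp (by simpa using hJ)
        rw [koszulD_apply, Fin.sum_univ_one, dif_pos (Finset.mem_univ (0 : Fin 1))]
        have hsign : koszulSign (univ : Finset (Fin 1)) 0 = 1 := by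
          simp [koszulSign, Fin.not_lt_zero]
        rw [hsign, one_smul]
        exact hx
  | succ q IH =>
    intro φ hcomm hinj
    have hcomm' : ∀ i j : Fin (q + 1),
        (φ i.castSucc) ∘ₗ (φ j.castSucc) = (φ j.castSucc) ∘ₗ (φ i.castSucc) :=
      fun i j => hcomm _ _
    have hsupA : ∀ j : Fin (q + 1),
        (⨆ i : {i : Fin (q + 2) // i < j.castSucc}, LinearMap.range (φ i.1))
          = ⨆ i : {i : Fin (q + 1) // i < j}, LinearMap.range (φ i.1.castSucc) := by
      intro j
      apply le_antisymm
      · apply iSup_le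
        rintro ⟨i, hi⟩
        rw [Fin.lt_def, Fin.coe_castSucc] at hi
        have hi1 : (i : ℕ) < q + 1 := by have := j.isLt; omega
        refine le_iSup_of_le ⟨⟨(i : ℕ), hi1⟩, by rw [Fin.lt_def]; exact hi⟩ ?_
        have hcast : ((⟨(i : ℕ), hi1⟩ : Fin (q + 1)).castSucc) = i := by
          ext; simp
        rw [hcast]
      · apply iSup_le
        rintro ⟨i, hi⟩
        exact le_iSup_of_le ⟨i.castSucc, by rwa [Fin.castSucc_lt_castSucc_iff]⟩ le_rfl
    have hsupLast :
        (⨆ i : {i : Fin (q + 2) // i < Fin.last (q + 1)}, LinearMap.range (φ i.1))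
          = ⨆ i : Fin (q + 1), LinearMap.range (φ i.castSucc) := by
      apply le_antisymm
      · apply iSup_le
        rintro ⟨i, hi⟩
        rw [Fin.lt_def, Fin.val_last] at hi
        refine le_iSup_of_le ⟨(i : ℕ), hi⟩ ?_
        have hcast : ((⟨(i : ℕ), hi⟩ : Fin (q + 1)).castSucc) = i := by ext; simp
        rw [hcast]
      · apply iSup_le
        intro i
        exact le_iSup_of_le ⟨i.castSucc, Fin.castSucc_lt_last i⟩ le_rfl
    have hsupTop :
        (⨆ i : Fin (q + 2), LinearMap.range (φ i))
          = (⨆ i : Fin (q + 1), LinearMap.range (φ i.castSucc))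
              ⊔ LinearMap.range (φ (Fin.last (q + 1))) := by
      apply le_antisymm
      · apply iSup_le
        intro i
        induction i using Fin.lastCases with
        | last => exact le_sup_of_le_right le_rfl
        | cast i =>
          exact le_sup_of_le_left (le_iSup (fun i : Fin (q + 1) =>
            LinearMap.range (φ i.castSucc)) i)
      · exact sup_le (iSup_le fun i => le_iSup_of_le i.castSucc le_rfl)
          (le_iSup (fun i : Fin (q + 2) => LinearMap.range (φ i)) (Fin.last (q + 1)))
    have hinj' : ∀ j : Fin (q + 1), ∀ x : M,
        φ j.castSucc x ∈ (⨆ i : {i : Fin (q + 1) // i < j},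
          LinearMap.range (φ i.1.castSucc)) →
        x ∈ ⨆ i : {i : Fin (q + 1) // i < j}, LinearMap.range (φ i.1.castSucc) := by
      intro j x hx
      rw [← hsupA j] at hx ⊢
      exact hinj j.castSucc x hx
    obtain ⟨IH1, IH2, IH3⟩ := IH (fun i : Fin (q + 1) => φ i.castSucc) hcomm' hinj'
    have hφn : ∀ (k : ℕ) (f : {K : Finset (Fin (q + 1)) // K.card = k} → M),
        koszulD (fun i : Fin (q + 1) => φ i.castSucc) (fun K => φ (Fin.last (q + 1)) (f K))
          = fun K => φ (Fin.last (q + 1)) (koszulD (fun i : Fin (q + 1) => φ i.castSucc) f K) :=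
      fun k f => koszulD_comp _ (φ (Fin.last (q + 1))) (fun i => hcomm _ _) f
    refine ⟨?_, ?_, ?_⟩
    · -- degree 0
      intro f hf
      have h0 : koszulD (fun i : Fin (q + 1) => φ i.castSucc) (res0 f) = 0 := by
        have h := congrArg res0 hf
        rw [res0_koszulD, res0_zero] at h
        exact h
      have hres := IH1 (res0 f) h0
      funext ⟨J, hJ⟩
      obtain rfl : J = ∅ := Finset.card_eq_zero.mp hJ
      show f ⟨∅, hJ⟩ = 0
      rw [show (⟨∅, hJ⟩ : {J : Finset (Fin (q + 2)) // J.card = 0})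
          = ⟨cs (∅ : Finset (Fin (q + 1))), by rw [card_cs]; rfl⟩ from
        Subtype.ext (Finset.map_empty _).symm]
      exact congrFun hres ⟨∅, rfl⟩
    · -- middle degrees
      intro k hk f hf
      have hd0 : koszulD (fun i : Fin (q + 1) => φ i.castSucc) (res0 f) = 0 := by
        have h := congrArg res0 hf
        rw [res0_koszulD, res0_zero] at h
        exact h
      have hd1 : koszulD (fun i : Fin (q + 1) => φ i.castSucc) (res1 f)
          = fun K => ((-1 : ℤ) ^ k) • φ (Fin.last (q + 1)) (res0 f K) := by
        have h := congrArg res1 hf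
        rw [res1_koszulD, res1_zero] at h
        funext K
        have h2 := congrFun h K
        simp only [Pi.add_apply, Pi.zero_apply] at h2
        rw [eq_neg_of_add_eq_zero_left h2, ← neg_smul]
        congr 1
        ring
      have hg0 : ∃ g₀ : {K : Finset (Fin (q + 1)) // K.card = k} → M,
          koszulD (fun i : Fin (q + 1) => φ i.castSucc) g₀ = res0 f := by
        by_cases hkq : k + 1 < q + 1
        · exact IH2 k hkq (res0 f) hd0
        · have hkq2 : k = q := by omega
          subst hkq2
          apply (IH3 (res0 f)).mpr
          have hFmem : φ (Fin.last (k + 1)) (res0 f ⟨univ, by simp⟩)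
              ∈ ⨆ i : Fin (k + 1), LinearMap.range (φ i.castSucc) := by
            have hex : ∃ g, koszulD (fun i : Fin (k + 1) => φ i.castSucc) g
                = (fun K => φ (Fin.last (k + 1)) (res0 f K)) := by
              refine ⟨((-1 : ℤ) ^ k) • res1 f, ?_⟩
              rw [koszulD_zsmul, hd1]
              funext K
              show ((-1 : ℤ) ^ k) • (((-1 : ℤ) ^ k) • φ (Fin.last (k + 1)) (res0 f K))
                = φ (Fin.last (k + 1)) (res0 f K)
              rw [smul_smul, ← pow_add, Even.neg_one_pow ⟨k, rfl⟩, one_smul]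
            exact (IH3 _).mp hex
          have h2 := hinj (Fin.last (k + 1)) (res0 f ⟨univ, by simp⟩)
            (by rw [hsupLast]; exact hFmem)
          rw [hsupLast] at h2
          exact h2
      obtain ⟨g₀, hg₀⟩ := hg0
      have hdh : koszulD (fun i : Fin (q + 1) => φ i.castSucc)
          (res1 f - fun K => ((-1 : ℤ) ^ k) • φ (Fin.last (q + 1)) (g₀ K)) = 0 := by
        rw [koszulD_sub, hd1]
        have heq : koszulD (fun i : Fin (q + 1) => φ i.castSucc)
            (fun K => ((-1 : ℤ) ^ k) • φ (Fin.last (q + 1)) (g₀ K))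
            = fun K => ((-1 : ℤ) ^ k) • φ (Fin.last (q + 1)) (res0 f K) := by
          have e1 : (fun K : {K : Finset (Fin (q + 1)) // K.card = k}
                => ((-1 : ℤ) ^ k) • φ (Fin.last (q + 1)) (g₀ K))
              = ((-1 : ℤ) ^ k) • (fun K => φ (Fin.last (q + 1)) (g₀ K)) := rfl
          rw [e1, koszulD_zsmul, hφn k g₀, hg₀]
          funext K
          rfl
        rw [heq, sub_self]
      rcases k with _ | k'
      · -- k = 0
        have hres1 : res1 f = fun K => φ (Fin.last (q + 1)) (g₀ K) := by
          have h2 := sub_eq_zero.mp (IH1 _ hdh)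
          rw [h2]
          funext K
          show ((-1 : ℤ) ^ 0) • φ (Fin.last (q + 1)) (g₀ K) = φ (Fin.last (q + 1)) (g₀ K)
          rw [pow_zero, one_smul]
        refine ⟨fun _ => g₀ ⟨∅, rfl⟩, ?_⟩
        have hres0g : res0 (fun _ : {J : Finset (Fin (q + 2)) // J.card = 0}
            => g₀ ⟨∅, rfl⟩) = g₀ := by
          funext ⟨K, hK⟩
          obtain rfl : K = ∅ := Finset.card_eq_zero.mp hK
          rfl
        apply res_ext
        · rw [res0_koszulD, hres0g]
          exact hg₀
        · rw [res1_koszulD_zero, hres0g, hres1]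
      · -- k = k' + 1
        obtain ⟨g₁, hg₁⟩ := IH2 k' (by omega) _ hdh
        refine ⟨glue g₀ g₁, ?_⟩
        apply res_ext
        · rw [res0_koszulD, res0_glue]
          exact hg₀
        · rw [res1_koszulD, res1_glue, res0_glue, hg₁]
          exact sub_add_cancel _ _
    · -- top degree
      intro f
      constructor
      · rintro ⟨g, rfl⟩
        exact koszulD_mem_iSup φ g _
      · intro hf
        rw [hsupTop] at hf
        obtain ⟨a, ha, z, hz, hsum⟩ := Submodule.mem_sup.mp hf
        obtain ⟨x, rfl⟩ := hz
        obtain ⟨g₁, hg₁⟩ := (IH3 (fun _ => a)).mpr ha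
        refine ⟨glue (fun _ => ((-1 : ℤ) ^ (q + 1)) • x) g₁, ?_⟩
        apply res_ext
        · funext ⟨K, hK⟩
          exact absurd hK (by have h := K.card_le_univ; simp [Finset.card_univ] at h; omega)
        · rw [res1_koszulD, res1_glue, res0_glue, hg₁]
          funext ⟨K, hK⟩
          obtain rfl : K = univ := (Finset.card_eq_iff_eq_univ K).mp (by simp [hK])
          show a + ((-1 : ℤ) ^ (q + 1)) • φ (Fin.last (q + 1)) (((-1 : ℤ) ^ (q + 1)) • x)
            = res1 f ⟨univ, hK⟩
          rw [map_zsmul, smul_smul, ← pow_add, Even.neg_one_pow ⟨q + 1, rfl⟩, one_smul]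
          rw [show res1 f ⟨univ, hK⟩ = f ⟨univ, by simp⟩ from
            congrArg f (Subtype.ext insert_last_cs_univ)]
          exact hsum

end KoszulAux

/-- Koszul complex of a family of `p = q + 1` commuting endomorphisms
`φ₁, …, φ_p` of `M`: if for each `j` the endomorphism induced by `φ_j` on
`M / (φ₁(M) + ⋯ + φ_{j-1}(M))` is injective, then `H^j` of the Koszul complex
vanishes for `j ≠ p` and `H^p ≅ M / (φ₁(M) + ⋯ + φ_p(M))` (expressed below by:
the complex is exact in degrees `< p`, and an element of the top term is a
boundary iff its value lies in `φ₁(M) + ⋯ + φ_p(M)`). -/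
theorem koszul_cohomology {R : Type*} [CommRing R] {M : Type*} [AddCommGroup M]
    [Module R M] {q : ℕ} (φ : Fin (q + 1) → M →ₗ[R] M)
    (hcomm : ∀ i j, (φ i) ∘ₗ (φ j) = (φ j) ∘ₗ (φ i))
    (hinj : ∀ j : Fin (q + 1), ∀ x : M,
      φ j x ∈ (⨆ i : {i : Fin (q + 1) // i < j}, LinearMap.range (φ i.1)) →
      x ∈ ⨆ i : {i : Fin (q + 1) // i < j}, LinearMap.range (φ i.1)) :
    (∀ f : {J : Finset (Fin (q + 1)) // J.card = 0} → M,
      koszulD φ f = 0 → f = 0) ∧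
    (∀ k : ℕ, k + 1 < q + 1 →
      ∀ f : {J : Finset (Fin (q + 1)) // J.card = k + 1} → M,
        koszulD φ f = 0 → ∃ g, koszulD φ g = f) ∧
    (∀ f : {J : Finset (Fin (q + 1)) // J.card = q + 1} → M,
      (∃ g : {J : Finset (Fin (q + 1)) // J.card = q} → M, koszulD φ g = f) ↔
        f ⟨Finset.univ, by simp⟩ ∈ ⨆ i : Fin (q + 1), LinearMap.range (φ i)) := by
  exact KoszulAux.main q φ hcomm hinj
end
end

section
/- Let Φ: ℂⁿ ∖ {z₁ = 0} → (ℂ∖{0}) × ℂ^{n-1} be given by (z₁,…,z_n) ↦ (z₁, z₂/z₁, …, z_n/z₁), and let φ: (S^{2n-1} ∖ {z₁=0})∞ → S¹∞ × ℂ^{n-1} be given by (z₁,…,z_n)∞ ↦ ((z₁/|z₁|)∞, z₂/z₁, …, z_n/z₁). Then the map Φ̂ = Φ ⊔ φ from 𝔻_{ℂⁿ} ∖ closure({z₁ = 0}) to (𝔻_ℂ ∖ {0}) × ℂ^{n-1} is a homeomorphism. -/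
open Metric Filter

noncomputable section

/-- The hyperplane `{z₁ = 0}` viewed inside `𝔻_{ℂⁿ}` (as a set of finite points). -/
def Hhyp (m : ℕ) : Set (DE (m + 1)) :=
  {p | ∃ z : Cn (m + 1), z 0 = 0 ∧ p = Sum.inl z}

/-!
Everything is transported to closed unit balls through the charts `z ↦ z / (1 + ‖z‖)` that
define the topologies of the radial compactifications. There `closure {z₁ = 0}` becomes the
closed ball cut by the hyperplane, and `Φ̂` becomes
`ζ ↦ (ζ₁ / (1 - ‖ζ‖ + |ζ₁|), ζ₂ / ζ₁, …, ζₙ / ζ₁)`: the denominator is chosen so that for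
`ζ = z / (1 + ‖z‖)` the first component is `z₁ / (1 + |z₁|)`, the chart of `z₁`, while on the
unit sphere it is `ζ₁ / |ζ₁|`. This map is continuous where `ζ₁ ≠ 0`, and so is its inverse
`(w, v) ↦ w / (1 + |w| (‖(1, v)‖ - 1)) • (1, v)`, whose denominator is at least `1`.
-/

section RadialCompactification

variable {E : Type*} [NormedAddCommGroup E] [NormedSpace ℝ E]

theorem norm_inv_one_add_norm_smul (u : E) : ‖(1 + ‖u‖)⁻¹ • u‖ = ‖u‖ / (1 + ‖u‖) := by
  rw [norm_smul, norm_inv, Real.norm_of_nonneg (by positivity), inv_mul_eq_div]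

theorem norm_inv_one_add_norm_smul_lt_one (u : E) : ‖(1 + ‖u‖)⁻¹ • u‖ < 1 := by
  rw [norm_inv_one_add_norm_smul, div_lt_one (by positivity)]
  linarith

variable (E) in
/-- The formula of `phiD`, so that `phiD n` is `radialEquiv (Cn n)` by definition and the
topology of `DE n` is coinduced by it. -/
def radialEquiv : closedBall (0 : E) 1 ≃ E ⊕ sphere (0 : E) 1 where
  toFun z :=
    if h : ‖(z : E)‖ < 1 then
      Sum.inl ((1 - ‖(z : E)‖)⁻¹ • (z : E))
    else
      Sum.inr ⟨(z : E),
        mem_sphere_zero_iff_norm.mpr (le_antisymm (mem_closedBall_zero_iff.mp z.2) (not_lt.mp h))⟩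
  invFun
    | Sum.inl u => ⟨(1 + ‖u‖)⁻¹ • u,
        mem_closedBall_zero_iff.mpr (norm_inv_one_add_norm_smul_lt_one u).le⟩
    | Sum.inr x => ⟨x, mem_closedBall_zero_iff.mpr (mem_sphere_zero_iff_norm.mp x.2).le⟩
  left_inv := by
    rintro ⟨z, hz⟩
    dsimp only
    split_ifs with h
    · have h1 : 0 < 1 - ‖z‖ := by linarith
      ext
      simp only
      rw [norm_smul, norm_inv, Real.norm_of_nonneg h1.le, smul_smul]
      field_simp
      simp
    · rfl
  right_inv := by
    rintro (u | x)
    · dsimp only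
      rw [dif_pos (norm_inv_one_add_norm_smul_lt_one u), norm_inv_one_add_norm_smul, smul_smul]
      congr 1
      field_simp
      simp
    · simp [mem_sphere_zero_iff_norm.mp x.2]

theorem radialEquiv_eq_inl_zero_iff (z : closedBall (0 : E) 1) :
    radialEquiv E z = Sum.inl 0 ↔ (z : E) = 0 := by
  rw [← Equiv.eq_symm_apply, Subtype.ext_iff]
  simp [radialEquiv]

end RadialCompactification

def radialHomeomorph (n : ℕ) : closedBall (0 : Cn n) 1 ≃ₜ DE n :=
  (radialEquiv (Cn n)).toHomeomorph fun _ => isOpen_coinduced.symm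

def radialHomeomorphDC : closedBall (0 : ℂ) 1 ≃ₜ DC :=
  (radialEquiv ℂ).toHomeomorph fun _ => isOpen_coinduced.symm

open Topology in
theorem closure_ball_inter_of_starConvex {E : Type*} [NormedAddCommGroup E] [NormedSpace ℝ E]
    {K : Set E} (hK : IsClosed K) (hK₀ : StarConvex ℝ 0 K) :
    closure (ball (0 : E) 1 ∩ K) = closedBall 0 1 ∩ K := by
  refine (closure_minimal (Set.inter_subset_inter_left _ ball_subset_closedBall)
    (isClosed_closedBall.inter hK)).antisymm fun x ⟨hx, hxK⟩ => ?_
  have hlim : Tendsto (fun t : ℝ => t • x) (𝓝[<] 1) (𝓝 x) := by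
    simpa using (tendsto_nhdsWithin_of_tendsto_nhds (tendsto_id (x := 𝓝 (1 : ℝ)))).smul_const x
  refine mem_closure_of_tendsto hlim ?_
  filter_upwards [Ioo_mem_nhdsLT one_pos] with t ⟨ht₀, ht₁⟩
  refine ⟨?_, hK₀.smul_mem hxK ht₀.le ht₁.le⟩
  rw [mem_ball_zero_iff, norm_smul, Real.norm_of_nonneg ht₀.le]
  have := mem_closedBall_zero_iff.mp hx
  nlinarith

theorem radialHomeomorph_preimage_Hhyp (m : ℕ) :
    radialHomeomorph (m + 1) ⁻¹' Hhyp m =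
      {ζ : closedBall (0 : Cn (m + 1)) 1 | ‖(ζ : Cn (m + 1))‖ < 1 ∧ (ζ : Cn (m + 1)) 0 = 0} := by
  ext ζ
  simp only [radialHomeomorph, Hhyp, Set.mem_preimage, Set.mem_ofPred_eq, Equiv.coe_toHomeomorph,
    radialEquiv, Equiv.coe_fn_mk]
  split_ifs with h
  · have : 1 - (‖(ζ : Cn (m + 1))‖ : ℂ) ≠ 0 := by exact_mod_cast (sub_pos.2 h).ne'
    simp [h, this]
  · simp [h]

theorem mem_closure_Hhyp_iff (m : ℕ) (ζ : closedBall (0 : Cn (m + 1)) 1) :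
    radialHomeomorph (m + 1) ζ ∈ closure (Hhyp m) ↔ (ζ : Cn (m + 1)) 0 = 0 := by
  have hK : IsClosed {z : Cn (m + 1) | z 0 = 0} :=
    isClosed_eq (PiLp.continuous_apply 2 _ 0) continuous_const
  have hK₀ : StarConvex ℝ 0 {z : Cn (m + 1) | z 0 = 0} :=
    starConvex_zero_iff.2 fun z hz a _ _ => by simp_all
  have himage : Subtype.val '' {ζ : closedBall (0 : Cn (m + 1)) 1 |
      ‖(ζ : Cn (m + 1))‖ < 1 ∧ (ζ : Cn (m + 1)) 0 = 0} = ball 0 1 ∩ {z | z 0 = 0} := by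
    ext z
    simp only [Subtype.coe_image, Set.mem_ofPred_eq, Set.mem_inter_iff, mem_ball_zero_iff]
    exact ⟨fun ⟨_, h⟩ => h, fun h => ⟨mem_closedBall_zero_iff.mpr h.1.le, h⟩⟩
  rw [← Set.mem_preimage, Homeomorph.preimage_closure, radialHomeomorph_preimage_Hhyp,
    closure_subtype, himage, closure_ball_inter_of_starConvex hK hK₀]
  exact and_iff_right ζ.2

section HomogeneousCoordinates

variable {m : ℕ}

def homogenize (v : Fin m → ℂ) : Cn (m + 1) := WithLp.toLp 2 (Fin.cons 1 v)

def dehomogenize (ζ : Cn (m + 1)) : Fin m → ℂ := fun i => ζ i.succ / ζ 0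

@[simp] theorem homogenize_zero (v : Fin m → ℂ) : homogenize v 0 = 1 := rfl

@[simp] theorem homogenize_succ (v : Fin m → ℂ) (i : Fin m) : homogenize v i.succ = v i := rfl

theorem continuous_homogenize : Continuous (homogenize (m := m)) :=
  (PiLp.continuous_toLp 2 _).comp (continuous_const.finCons continuous_id)

theorem one_le_norm_homogenize (v : Fin m → ℂ) : 1 ≤ ‖homogenize v‖ := by
  simpa using PiLp.norm_apply_le (homogenize v) 0

theorem dehomogenize_smul {c : ℂ} (hc : c ≠ 0) (ζ : Cn (m + 1)) :
    dehomogenize (c • ζ) = dehomogenize ζ := by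
  ext i
  simp [dehomogenize, mul_div_mul_left _ _ hc]

theorem dehomogenize_homogenize (v : Fin m → ℂ) : dehomogenize (homogenize v) = v := by
  ext i
  simp [dehomogenize]

theorem smul_homogenize_dehomogenize {ζ : Cn (m + 1)} (h : ζ 0 ≠ 0) :
    ζ 0 • homogenize (dehomogenize ζ) = ζ := by
  ext j
  induction j using Fin.cases with
  | zero => simp
  | succ i => simp [dehomogenize, mul_div_cancel₀ _ h]

theorem norm_mul_norm_homogenize_dehomogenize {ζ : Cn (m + 1)} (h : ζ 0 ≠ 0) :
    ‖ζ 0‖ * ‖homogenize (dehomogenize ζ)‖ = ‖ζ‖ := by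
  rw [← norm_smul, smul_homogenize_dehomogenize h]

end HomogeneousCoordinates

section BallModel

variable {m : ℕ}

def ballDenom (ζ : Cn (m + 1)) : ℝ := 1 - ‖ζ‖ + ‖ζ 0‖

def discDenom (w : ℂ) (v : Fin m → ℂ) : ℝ := 1 + ‖w‖ * (‖homogenize v‖ - 1)

def ballToDisc (ζ : Cn (m + 1)) : ℂ := (ballDenom ζ)⁻¹ • ζ 0

def ballOfDisc (w : ℂ) (v : Fin m → ℂ) : Cn (m + 1) := ((discDenom w v)⁻¹ • w) • homogenize v

theorem ballDenom_pos {ζ : Cn (m + 1)} (h1 : ‖ζ‖ ≤ 1) (h0 : ζ 0 ≠ 0) : 0 < ballDenom ζ := by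
  have := norm_pos_iff.2 h0
  unfold ballDenom
  linarith

theorem one_le_discDenom (w : ℂ) (v : Fin m → ℂ) : 1 ≤ discDenom w v := by
  have := one_le_norm_homogenize v
  unfold discDenom
  nlinarith [norm_nonneg w]

theorem discDenom_pos (w : ℂ) (v : Fin m → ℂ) : 0 < discDenom w v :=
  one_pos.trans_le (one_le_discDenom w v)

theorem norm_ballToDisc {ζ : Cn (m + 1)} (h1 : ‖ζ‖ ≤ 1) (h0 : ζ 0 ≠ 0) :
    ‖ballToDisc ζ‖ = ‖ζ 0‖ / ballDenom ζ := by
  rw [ballToDisc, norm_smul, norm_inv, Real.norm_of_nonneg (ballDenom_pos h1 h0).le,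
    inv_mul_eq_div]

theorem norm_ballToDisc_le_one {ζ : Cn (m + 1)} (h1 : ‖ζ‖ ≤ 1) (h0 : ζ 0 ≠ 0) :
    ‖ballToDisc ζ‖ ≤ 1 := by
  rw [norm_ballToDisc h1 h0, div_le_one (ballDenom_pos h1 h0), ballDenom]
  linarith

theorem ballToDisc_ne_zero {ζ : Cn (m + 1)} (h1 : ‖ζ‖ ≤ 1) (h0 : ζ 0 ≠ 0) :
    ballToDisc ζ ≠ 0 :=
  smul_ne_zero (inv_ne_zero (ballDenom_pos h1 h0).ne') h0

@[simp] theorem ballOfDisc_zero (w : ℂ) (v : Fin m → ℂ) :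
    ballOfDisc w v 0 = (discDenom w v)⁻¹ • w := by
  simp [ballOfDisc]

theorem norm_ballOfDisc (w : ℂ) (v : Fin m → ℂ) :
    ‖ballOfDisc w v‖ = ‖w‖ * ‖homogenize v‖ / discDenom w v := by
  rw [ballOfDisc, norm_smul, norm_smul, norm_inv,
    Real.norm_of_nonneg (discDenom_pos w v).le]
  field_simp

theorem norm_ballOfDisc_le_one {w : ℂ} (hw : ‖w‖ ≤ 1) (v : Fin m → ℂ) :
    ‖ballOfDisc w v‖ ≤ 1 := by
  rw [norm_ballOfDisc, div_le_one (discDenom_pos w v), discDenom]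
  linarith

theorem ballOfDisc_zero_ne_zero {w : ℂ} (hw : w ≠ 0) (v : Fin m → ℂ) : ballOfDisc w v 0 ≠ 0 := by
  rw [ballOfDisc_zero]
  exact smul_ne_zero (inv_ne_zero (discDenom_pos w v).ne') hw

theorem ballOfDisc_ballToDisc {ζ : Cn (m + 1)} (h1 : ‖ζ‖ ≤ 1) (h0 : ζ 0 ≠ 0) :
    ballOfDisc (ballToDisc ζ) (dehomogenize ζ) = ζ := by
  have hd := ballDenom_pos h1 h0
  have hD : discDenom (ballToDisc ζ) (dehomogenize ζ) = (ballDenom ζ)⁻¹ := by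
    have hL := norm_mul_norm_homogenize_dehomogenize h0
    rw [discDenom, norm_ballToDisc h1 h0]
    field_simp
    rw [ballDenom]
    linarith
  rw [ballOfDisc, hD, inv_inv, ballToDisc, smul_smul, mul_inv_cancel₀ hd.ne', one_smul,
    smul_homogenize_dehomogenize h0]

theorem ballToDisc_ballOfDisc (w : ℂ) (v : Fin m → ℂ) : ballToDisc (ballOfDisc w v) = w := by
  have hD := discDenom_pos w v
  have hd : ballDenom (ballOfDisc w v) = (discDenom w v)⁻¹ := by
    rw [ballDenom, norm_ballOfDisc, ballOfDisc_zero, norm_smul, norm_inv,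
      Real.norm_of_nonneg hD.le]
    field_simp
    rw [discDenom]
    ring
  rw [ballToDisc, hd, ballOfDisc_zero, inv_inv, smul_smul, mul_inv_cancel₀ hD.ne', one_smul]

theorem dehomogenize_ballOfDisc {w : ℂ} (hw : w ≠ 0) (v : Fin m → ℂ) :
    dehomogenize (ballOfDisc w v) = v := by
  rw [ballOfDisc, dehomogenize_smul, dehomogenize_homogenize]
  exact smul_ne_zero (inv_ne_zero (discDenom_pos w v).ne') hw

theorem continuous_ballDenom : Continuous (ballDenom (m := m)) :=
  (continuous_const.sub continuous_norm).add (PiLp.continuous_apply 2 _ 0).norm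

theorem continuous_discDenom : Continuous fun p : ℂ × (Fin m → ℂ) => discDenom p.1 p.2 :=
  continuous_const.add <| continuous_fst.norm.mul <|
    (continuous_homogenize.comp continuous_snd).norm.sub continuous_const

variable (m) in
def ballModel : {ζ : closedBall (0 : Cn (m + 1)) 1 // (ζ : Cn (m + 1)) 0 ≠ 0} ≃ₜ
    {w : closedBall (0 : ℂ) 1 // (w : ℂ) ≠ 0} × (Fin m → ℂ) where
  toFun ζ :=
    (⟨⟨ballToDisc ζ.1.1, mem_closedBall_zero_iff.2
        (norm_ballToDisc_le_one (mem_closedBall_zero_iff.1 ζ.1.2) ζ.2)⟩,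
      ballToDisc_ne_zero (mem_closedBall_zero_iff.1 ζ.1.2) ζ.2⟩, dehomogenize ζ.1.1)
  invFun p :=
    ⟨⟨ballOfDisc p.1.1.1 p.2, mem_closedBall_zero_iff.2
        (norm_ballOfDisc_le_one (mem_closedBall_zero_iff.1 p.1.1.2) p.2)⟩,
      ballOfDisc_zero_ne_zero p.1.2 p.2⟩
  left_inv ζ := Subtype.ext <| Subtype.ext <|
    ballOfDisc_ballToDisc (mem_closedBall_zero_iff.1 ζ.1.2) ζ.2
  right_inv p := Prod.ext (Subtype.ext <| Subtype.ext <| ballToDisc_ballOfDisc _ _)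
    (dehomogenize_ballOfDisc p.1.2 _)
  continuous_toFun := by
    have hζ : Continuous fun ζ : {ζ : closedBall (0 : Cn (m + 1)) 1 // (ζ : Cn (m + 1)) 0 ≠ 0} =>
        (ζ : Cn (m + 1)) := continuous_subtype_val.comp continuous_subtype_val
    have h0 := (PiLp.continuous_apply 2 _ 0).comp hζ
    refine .prodMk (.subtype_mk (.subtype_mk ?_ _) _) (continuous_pi fun i => ?_)
    · exact ((continuous_ballDenom.comp hζ).inv₀ fun ζ =>
        (ballDenom_pos (mem_closedBall_zero_iff.1 ζ.1.2) ζ.2).ne').smul h0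
    · exact ((PiLp.continuous_apply 2 _ i.succ).comp hζ).div h0 fun ζ => ζ.2
  continuous_invFun := by
    have hw : Continuous fun p : {w : closedBall (0 : ℂ) 1 // (w : ℂ) ≠ 0} × (Fin m → ℂ) =>
        (p.1 : ℂ) :=
      continuous_subtype_val.comp (continuous_subtype_val.comp continuous_fst)
    refine .subtype_mk (.subtype_mk ?_ _) _
    exact (((continuous_discDenom.comp (hw.prodMk continuous_snd)).inv₀ fun p =>
      (discDenom_pos _ _).ne').smul hw).smul (continuous_homogenize.comp continuous_snd)

end BallModel

theorem ballToDisc_inv_one_add_norm_smul {m : ℕ} (z : Cn (m + 1)) :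
    ballToDisc ((1 + ‖z‖)⁻¹ • z) = (1 + ‖z 0‖)⁻¹ • z 0 := by
  have hz : 0 < 1 + ‖z‖ := by positivity
  have hz0 : 0 < 1 + ‖z 0‖ := by positivity
  have hd : ballDenom ((1 + ‖z‖)⁻¹ • z) = (1 + ‖z 0‖) / (1 + ‖z‖) := by
    rw [ballDenom, norm_inv_one_add_norm_smul, PiLp.smul_apply, norm_smul, norm_inv,
      Real.norm_of_nonneg hz.le]
    field_simp
    ring
  rw [ballToDisc, hd, PiLp.smul_apply, smul_smul, inv_div]
  congr 1
  field_simp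

theorem ballToDisc_of_norm_eq_one {m : ℕ} {x : Cn (m + 1)} (hx : ‖x‖ = 1) :
    ballToDisc x = x 0 / (‖x 0‖ : ℂ) := by
  simp [ballToDisc, ballDenom, hx, Complex.real_smul, div_eq_inv_mul]

def PhiHat (m : ℕ) :
    {p : DE (m + 1) // p ∉ closure (Hhyp m)} ≃ₜ {q : DC // q ≠ Sum.inl 0} × (Fin m → ℂ) :=
  ((radialHomeomorph (m + 1)).subtype fun ζ => (mem_closure_Hhyp_iff m ζ).not.symm).symm.trans <|
    (ballModel m).trans <|
      (radialHomeomorphDC.subtype fun w => (radialEquiv_eq_inl_zero_iff w).not.symm).prodCongr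
        (Homeomorph.refl _)

theorem radialEquiv_symm_PhiHat_fst {m : ℕ} (p : {p : DE (m + 1) // p ∉ closure (Hhyp m)}) :
    (((radialEquiv ℂ).symm (PhiHat m p).1 : closedBall (0 : ℂ) 1) : ℂ) =
      ballToDisc ((radialEquiv (Cn (m + 1))).symm p : Cn (m + 1)) :=
  congrArg Subtype.val ((radialEquiv ℂ).symm_apply_apply _)

theorem PhiHat_snd {m : ℕ} (p : {p : DE (m + 1) // p ∉ closure (Hhyp m)}) :
    (PhiHat m p).2 = dehomogenize ((radialEquiv (Cn (m + 1))).symm p : Cn (m + 1)) :=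
  rfl

theorem radialEquiv_symm_zero_ne_zero {m : ℕ} (p : {p : DE (m + 1) // p ∉ closure (Hhyp m)}) :
    ((radialEquiv (Cn (m + 1))).symm p : Cn (m + 1)) 0 ≠ 0 :=
  (((radialHomeomorph (m + 1)).subtype fun ζ => (mem_closure_Hhyp_iff m ζ).not.symm).symm p).2

/-- The map `Φ̂ = Φ ⊔ φ` from `𝔻_{ℂⁿ} ∖ closure({z₁ = 0})` to
`(𝔻_ℂ ∖ {0}) × ℂ^{n-1}` is a homeomorphism, where
`Φ(z₁,…,z_n) = (z₁, z₂/z₁, …, z_n/z₁)` and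
`φ((z₁,…,z_n)∞) = ((z₁/|z₁|)∞, z₂/z₁, …, z_n/z₁)`. -/
theorem PhiHat_homeomorph (m : ℕ) :
    ∃ Φhat : {p : DE (m + 1) // p ∉ closure (Hhyp m)} ≃ₜ
        ({q : DC // q ≠ Sum.inl 0} × (Fin m → ℂ)),
      (∀ (z : Cn (m + 1)) (hz : (Sum.inl z : DE (m + 1)) ∉ closure (Hhyp m)),
        ((Φhat ⟨Sum.inl z, hz⟩).1 : DC) = Sum.inl (z 0) ∧
        (Φhat ⟨Sum.inl z, hz⟩).2 = fun i => z i.succ / z 0) ∧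
      (∀ (x : Metric.sphere (0 : Cn (m + 1)) 1)
          (hx : (Sum.inr x : DE (m + 1)) ∉ closure (Hhyp m)),
        (∃ c : Metric.sphere (0 : ℂ) 1,
          ((Φhat ⟨Sum.inr x, hx⟩).1 : DC) = Sum.inr c ∧
          (c : ℂ) = (x : Cn (m + 1)) 0 / ((‖(x : Cn (m + 1)) 0‖ : ℝ) : ℂ)) ∧
        (Φhat ⟨Sum.inr x, hx⟩).2 =
          fun i => (x : Cn (m + 1)) i.succ / (x : Cn (m + 1)) 0) := by
  refine ⟨PhiHat m, fun z hz => ⟨?_, ?_⟩, fun x hx => ⟨?_, PhiHat_snd _⟩⟩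
  · apply (radialEquiv ℂ).symm.injective
    exact Subtype.ext ((radialEquiv_symm_PhiHat_fst _).trans (ballToDisc_inv_one_add_norm_smul z))
  · change dehomogenize ((1 + ‖z‖)⁻¹ • z) = dehomogenize z
    rw [RCLike.real_smul_eq_coe_smul (K := ℂ)]
    exact dehomogenize_smul (Complex.ofReal_ne_zero.2 (inv_pos.2 (by positivity)).ne') z
  · have hx0 : (x : Cn (m + 1)) 0 ≠ 0 := radialEquiv_symm_zero_ne_zero ⟨_, hx⟩
    have hc : ‖(x : Cn (m + 1)) 0 / ((‖(x : Cn (m + 1)) 0‖ : ℝ) : ℂ)‖ = 1 := by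
      rw [norm_div, Complex.norm_real, norm_norm, div_self (norm_ne_zero_iff.2 hx0)]
    refine ⟨⟨_, mem_sphere_zero_iff_norm.2 hc⟩, ?_, rfl⟩
    apply (radialEquiv ℂ).symm.injective
    exact Subtype.ext ((radialEquiv_symm_PhiHat_fst _).trans
      (ballToDisc_of_norm_eq_one (mem_sphere_zero_iff_norm.1 x.2)))
end
end

section
/- With notation as above, the homeomorphism Φ̂ maps the closure of ℝⁿ intersected with the domain onto (ℝ̄ × ℝ^{n-1}) intersected with the codomain: i.e., Φ̂( (closure of ℝⁿ in 𝔻_{ℂⁿ}) ∖ closure({z₁ = 0}) ) = (ℝ̄ ∖ {0}) × ℝ^{n-1}, where ℝ̄ = ℝ ⊔ {±∞} is the closure of ℝ in 𝔻_ℂ. -/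
open Metric Filter

noncomputable section

/-- The closure of `ℝⁿ ⊂ ℂⁿ` in `𝔻_{ℂⁿ}`. -/
def realPtsN (m : ℕ) : Set (DE (m + 1)) :=
  closure (Sum.inl '' {z : Cn (m + 1) | ∀ i, (z i).im = 0})

/-- `ℝ̄ ⊂ 𝔻_ℂ`, the closure of `ℝ ⊂ ℂ` in `𝔻_ℂ`. -/
def realPtsC : Set DC := closure (Sum.inl '' {z : ℂ | z.im = 0})

/-!
`Φ̂` is a homeomorphism between open subsets of `𝔻_{ℂⁿ}` and `𝔻_ℂ × ℂ^{n-1}`, so it carries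
relative closures to relative closures, and the closure of a set relative to an open subset is the
trace of its closure. It therefore suffices to know `Φ̂` on the finite real points: there it is
`Φ`, which maps `ℝⁿ ∖ {z₁ = 0}` onto `(ℝ ∖ {0}) × ℝ^{n-1}` with inverse `(a, v) ↦ (a, a v)`.
The closure of that product is `(ℝ̄ ∖ {0}) × ℝ^{n-1}`.
-/

open Topology

section RadialCompactification

variable (E : Type*) [NormedAddCommGroup E] [NormedSpace ℝ E]

/-- `phiD n` and `phiDC` are, definitionally, this map for `E = ℂⁿ` and `E = ℂ`. -/
def radialMap : closedBall (0 : E) 1 → E ⊕ sphere (0 : E) 1 :=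
  fun z =>
    if h : ‖(z : E)‖ < 1 then
      Sum.inl ((1 - ‖(z : E)‖)⁻¹ • (z : E))
    else
      Sum.inr ⟨(z : E), mem_sphere_zero_iff_norm.mpr
        (le_antisymm (mem_closedBall_zero_iff.mp z.2) (not_lt.mp h))⟩

abbrev radialTopology : TopologicalSpace (E ⊕ sphere (0 : E) 1) :=
  .coinduced (radialMap E) inferInstance

variable {E}

lemma radialMap_mem_inl_image_iff {w : closedBall (0 : E) 1} {S : Set E} :
    radialMap E w ∈ Sum.inl '' S ↔ ‖(w : E)‖ < 1 ∧ (1 - ‖(w : E)‖)⁻¹ • (w : E) ∈ S := by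
  unfold radialMap
  split_ifs with h <;> simp [h]

lemma isOpen_inl_image {S : Set E} (hS : IsOpen S) :
    IsOpen[radialTopology E] (Sum.inl '' S) := by
  have hpre : radialMap E ⁻¹' (Sum.inl '' S) =
      {w : closedBall (0 : E) 1 | ‖(w : E)‖ < 1} ∩
        (fun w : closedBall (0 : E) 1 => (1 - ‖(w : E)‖)⁻¹ • (w : E)) ⁻¹' S :=
    Set.ext fun _ => radialMap_mem_inl_image_iff
  rw [radialTopology, isOpen_coinduced, hpre]
  refine ContinuousOn.isOpen_inter_preimage ?_ (isOpen_lt (by fun_prop) continuous_const) hS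
  intro w hw
  have : (1 - ‖(w : E)‖) ≠ 0 := (sub_pos.mpr hw).ne'
  fun_prop (disch := assumption)

lemma isClosed_singleton_inl_zero : IsClosed[radialTopology E] {Sum.inl (0 : E)} := by
  have hpre : radialMap E ⁻¹' {Sum.inl 0} = {w : closedBall (0 : E) 1 | (w : E) = 0} := by
    ext w
    rw [← Set.image_singleton, Set.mem_preimage, radialMap_mem_inl_image_iff]
    constructor
    · rintro ⟨hw, h⟩
      simpa [(sub_pos.mpr hw).ne'] using h
    · intro (h : (w : E) = 0)
      simp [h]
  rw [radialTopology, isClosed_coinduced, hpre]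
  exact isClosed_eq continuous_subtype_val continuous_const

end RadialCompactification

lemma setOf_val_mem_closure {X : Type*} [TopologicalSpace X] {p : X → Prop}
    (hp : IsOpen {x | p x}) (s : Set X) :
    {x : {x // p x} | (x : X) ∈ closure s} = closure {x : {x // p x} | (x : X) ∈ s} :=
  hp.isOpenMap_subtype_val.preimage_closure_eq_closure_preimage continuous_subtype_val s

lemma isOpen_ne_inl_zero : IsOpen {q : DC | q ≠ Sum.inl 0} :=
  (isClosed_singleton_inl_zero (E := ℂ)).isOpen_compl

lemma inl_notMem_closure_Hhyp {m : ℕ} {z : Cn (m + 1)} (hz : z 0 ≠ 0) :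
    (Sum.inl z : DE (m + 1)) ∉ closure (Hhyp m) := by
  have hopen : IsOpen (Sum.inl '' {z : Cn (m + 1) | z 0 ≠ 0} : Set (DE (m + 1))) :=
    isOpen_inl_image (isOpen_ne_fun (by fun_prop) continuous_const)
  have hdisj : Disjoint (Sum.inl '' {z : Cn (m + 1) | z 0 ≠ 0}) (Hhyp m) := by
    rw [Set.disjoint_left]
    rintro _ ⟨w, hw, rfl⟩ ⟨w', hw', hww'⟩
    exact hw (Sum.inl_injective hww' ▸ hw')
  exact Set.disjoint_left.mp (hdisj.closure_right hopen) ⟨z, hz, rfl⟩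

lemma isClosed_setOf_forall_im_eq_zero (ι : Type*) :
    IsClosed {v : ι → ℂ | ∀ i, (v i).im = 0} :=
  Set.ofPred_forall _ ▸ isClosed_iInter fun i =>
    isClosed_eq (Complex.continuous_im.comp (continuous_apply i)) continuous_const

lemma PhiHat_image_inl_real {m : ℕ}
    (Φ : {p : DE (m + 1) // p ∉ closure (Hhyp m)} → {q : DC // q ≠ Sum.inl 0} × (Fin m → ℂ))
    (hΦ : ∀ (z : Cn (m + 1)) (hz : (Sum.inl z : DE (m + 1)) ∉ closure (Hhyp m)),
        ((Φ ⟨Sum.inl z, hz⟩).1 : DC) = Sum.inl (z 0) ∧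
        (Φ ⟨Sum.inl z, hz⟩).2 = fun i => z i.succ / z 0) :
    Φ '' {p | (p : DE (m + 1)) ∈ Sum.inl '' {z : Cn (m + 1) | ∀ i, (z i).im = 0}} =
      {q : {q : DC // q ≠ Sum.inl 0} | (q : DC) ∈ Sum.inl '' {a : ℂ | a.im = 0}} ×ˢ
        {v : Fin m → ℂ | ∀ i, (v i).im = 0} := by
  ext ⟨q, v⟩
  constructor
  · rintro ⟨⟨_, hz⟩, ⟨z, hreal, rfl⟩, hq⟩
    obtain ⟨hfst, hsnd⟩ := hΦ z hz
    rw [← hq]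
    refine ⟨⟨z 0, hreal 0, hfst.symm⟩, fun i => ?_⟩
    simp [hsnd, Complex.div_im, hreal 0, hreal i.succ]
  · rintro ⟨⟨a, ha, hqa⟩, hv⟩
    have ha0 : a ≠ 0 := by
      rintro rfl
      exact q.2 hqa.symm
    set z : Cn (m + 1) := WithLp.toLp 2 (Fin.cons a fun i => a * v i)
    have hz0 : z 0 = a := rfl
    have hzsucc (i : Fin m) : z i.succ = a * v i := rfl
    have hz : (Sum.inl z : DE (m + 1)) ∉ closure (Hhyp m) := inl_notMem_closure_Hhyp (hz0 ▸ ha0)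
    have hreal : ∀ i, (z i).im = 0 := by
      refine Fin.cases ?_ fun i => ?_
      · exact ha
      · simp [hzsucc, Complex.mul_im, show a.im = 0 from ha, show (v i).im = 0 from hv i]
    obtain ⟨hfst, hsnd⟩ := hΦ z hz
    refine ⟨⟨_, hz⟩, ⟨z, hreal, rfl⟩, Prod.ext (Subtype.ext ?_) ?_⟩
    · rw [hfst, hz0, hqa]
    · simp only [hsnd, hzsucc, hz0, mul_div_cancel_left₀ _ ha0]

theorem PhiHat_real_image_general (m : ℕ)
    (Φhat : {p : DE (m + 1) // p ∉ closure (Hhyp m)} ≃ₜ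
        ({q : DC // q ≠ Sum.inl 0} × (Fin m → ℂ)))
    (h1 : ∀ (z : Cn (m + 1)) (hz : (Sum.inl z : DE (m + 1)) ∉ closure (Hhyp m)),
        ((Φhat ⟨Sum.inl z, hz⟩).1 : DC) = Sum.inl (z 0) ∧
        (Φhat ⟨Sum.inl z, hz⟩).2 = fun i => z i.succ / z 0) :
    (⇑Φhat) '' {p | (p : DE (m + 1)) ∈ realPtsN m} =
      {q | ((q.1 : DC) ∈ realPtsC) ∧ ∀ i, (q.2 i).im = 0} := by
  rw [realPtsN, setOf_val_mem_closure isClosed_closure.isOpen_compl, Φhat.image_closure,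
    PhiHat_image_inl_real Φhat h1, closure_prod_eq, ← setOf_val_mem_closure isOpen_ne_inl_zero,
    (isClosed_setOf_forall_im_eq_zero (Fin m)).closure_eq]
  rfl

/-- The homeomorphism `Φ̂` maps `(closure of ℝⁿ in 𝔻_{ℂⁿ}) ∖ closure({z₁ = 0})`
onto `(ℝ̄ ∖ {0}) × ℝ^{n-1}`. -/
theorem PhiHat_real_image (m : ℕ)
    (Φhat : {p : DE (m + 1) // p ∉ closure (Hhyp m)} ≃ₜ
        ({q : DC // q ≠ Sum.inl 0} × (Fin m → ℂ)))
    (h1 : ∀ (z : Cn (m + 1)) (hz : (Sum.inl z : DE (m + 1)) ∉ closure (Hhyp m)),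
        ((Φhat ⟨Sum.inl z, hz⟩).1 : DC) = Sum.inl (z 0) ∧
        (Φhat ⟨Sum.inl z, hz⟩).2 = fun i => z i.succ / z 0)
    (h2 : ∀ (x : Metric.sphere (0 : Cn (m + 1)) 1)
          (hx : (Sum.inr x : DE (m + 1)) ∉ closure (Hhyp m)),
        (∃ c : Metric.sphere (0 : ℂ) 1,
          ((Φhat ⟨Sum.inr x, hx⟩).1 : DC) = Sum.inr c ∧
          (c : ℂ) = (x : Cn (m + 1)) 0 / (‖(x : Cn (m + 1)) 0‖ : ℂ)) ∧
        (Φhat ⟨Sum.inr x, hx⟩).2 =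
          fun i => (x : Cn (m + 1)) i.succ / (x : Cn (m + 1)) 0) :
    (⇑Φhat) '' {p | (p : DE (m + 1)) ∈ realPtsN m} =
      {q | ((q.1 : DC) ∈ realPtsC) ∧ ∀ i, (q.2 i).im = 0} :=
  PhiHat_real_image_general m Φhat h1
end
end

section
/- Let ℱ be a sheaf of abelian groups on a topological space X and {Ω_i} an open covering of X. If ℱ|_{Ω_i} is flabby on Ω_i for every i, then ℱ is flabby on X. -/
open CategoryTheory TopologicalSpace Opposite

/-- A presheaf of abelian groups `F` is flabby on an open set `Ω` if for every
open `U ⊆ Ω` the restriction map `F(Ω) → F(U)` is surjective.  For `Ω = ⊤` this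
is the usual flabbiness of `F` on the whole space. -/
def FlabbyOn {X : TopCat} (F : TopCat.Presheaf AddCommGrpCat X) (Ω : Opens X) : Prop :=
  ∀ (U : Opens X) (h : U ≤ Ω), Function.Surjective (F.map (homOfLE h).op)

/-!
Zorn's lemma: local sections extending a given section, ordered by extension, form an inductive
set, since the members of a chain agree on overlaps and therefore glue. If a maximal extension `m`
did not contain some `Ω i`, flabbiness on `Ω i` would extend `m` restricted to `dom m ∩ Ω i` to all
of `Ω i`, and gluing this with `m` would give a strictly larger extension.
-/

namespace TopCat.Presheaf

universe u v

variable {X : TopCat.{u}} (G : Presheaf (Type v) X)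

structure LocalSection : Type (max u v) where
  dom : Opens X
  sec : G.obj (op dom)

namespace LocalSection

variable {G}

instance : Preorder (LocalSection G) where
  le p q := ∃ h : p.dom ≤ q.dom, G.map (homOfLE h).op q.sec = p.sec
  le_refl p := ⟨le_rfl, G.map_id_apply _ p.sec⟩
  le_trans p q r := fun ⟨hpq, epq⟩ ⟨hqr, eqr⟩ =>
    ⟨hpq.trans hqr, by rw [← epq, ← eqr, ← Functor.map_comp_apply]; rfl⟩

def Agree (p q : LocalSection G) : Prop :=
  ∀ (W : Opens X) (hp : W ≤ p.dom) (hq : W ≤ q.dom),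
    G.map (homOfLE hp).op p.sec = G.map (homOfLE hq).op q.sec

theorem Agree.symm {p q : LocalSection G} (h : Agree p q) : Agree q p :=
  fun W hq hp => (h W hp hq).symm

theorem agree_of_le {p q : LocalSection G} (hpq : p ≤ q) : Agree p q := by
  intro W hp hq
  obtain ⟨h, e⟩ := hpq
  rw [← e, ← Functor.map_comp_apply]
  rfl

theorem agree_of_map_inf_eq {p q : LocalSection G}
    (h : G.map (homOfLE inf_le_left : p.dom ⊓ q.dom ⟶ p.dom).op p.sec
      = G.map (homOfLE inf_le_right).op q.sec) :
    Agree p q := by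
  intro W hp hq
  have := congrArg (G.map (homOfLE (le_inf hp hq)).op) h
  rwa [← Functor.map_comp_apply, ← Functor.map_comp_apply] at this

variable (hG : G.IsSheaf)
include hG

theorem exists_ge_of_pairwise_agree {ι : Type*} (p : ι → LocalSection G)
    (hp : ∀ i j, Agree (p i) (p j)) : ∃ q : LocalSection G, ∀ i, p i ≤ q := by
  obtain ⟨s, hs, -⟩ := hG.isSheafUniqueGluing_types (fun i => (p i).sec)
    fun i j => hp i j _ inf_le_left inf_le_right
  exact ⟨⟨⨆ i, (p i).dom, s⟩, fun i => ⟨le_iSup (fun i => (p i).dom) i, hs i⟩⟩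

theorem exists_ge_of_agree {p q : LocalSection G} (h : Agree p q) :
    ∃ r : LocalSection G, p ≤ r ∧ q ≤ r := by
  obtain ⟨r, hr⟩ := exists_ge_of_pairwise_agree hG (fun b : Bool => cond b p q) <| by
    rintro (_ | _) (_ | _)
    exacts [agree_of_le le_rfl, h.symm, h, agree_of_le le_rfl]
  exact ⟨r, hr true, hr false⟩

theorem bddAbove_of_isChain {c : Set (LocalSection G)} (hc : IsChain (· ≤ ·) c) :
    BddAbove c := by
  obtain ⟨q, hq⟩ := exists_ge_of_pairwise_agree hG (fun p : c => p.1) fun p p' =>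
    (hc.total p.2 p'.2).elim agree_of_le fun h => (agree_of_le h).symm
  exact ⟨q, fun p hp => hq ⟨p, hp⟩⟩

theorem le_dom_of_isMax {m : LocalSection G} (hm : IsMax m) {Ω : Opens X}
    (hΩ : ∀ (W : Opens X) (h : W ≤ Ω), Function.Surjective (G.map (homOfLE h).op)) :
    Ω ≤ m.dom := by
  obtain ⟨t, ht⟩ := hΩ (m.dom ⊓ Ω) inf_le_right (G.map (homOfLE inf_le_left).op m.sec)
  obtain ⟨r, hmr, htr⟩ := exists_ge_of_agree hG (agree_of_map_inf_eq (q := ⟨Ω, t⟩) ht.symm)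
  exact (htr.trans (hm hmr)).1

end LocalSection

theorem surjective_map_top_of_cover (hG : G.IsSheaf) {ι : Type*} (Ω : ι → Opens X)
    (hcov : iSup Ω = ⊤)
    (hΩ : ∀ i (W : Opens X) (h : W ≤ Ω i), Function.Surjective (G.map (homOfLE h).op))
    {U : Opens X} (hU : U ≤ ⊤) : Function.Surjective (G.map (homOfLE hU).op) := by
  intro s
  obtain ⟨m, ⟨_, hm_s⟩, hm⟩ := zorn_le_nonempty_Ici₀ (⟨U, s⟩ : LocalSection G)
    (fun c _ hc _ _ => LocalSection.bddAbove_of_isChain hG hc) _ le_rfl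
  have htop : ⊤ ≤ m.dom := hcov ▸ iSup_le fun i => LocalSection.le_dom_of_isMax hG hm (hΩ i)
  refine ⟨G.map (homOfLE htop).op m.sec, ?_⟩
  rw [← Functor.map_comp_apply]
  exact hm_s

end TopCat.Presheaf

/-- If a sheaf of abelian groups is flabby on each member of an open covering of
`X`, then it is flabby on `X`. -/
theorem flabby_of_locally_flabby {X : TopCat} (F : TopCat.Sheaf AddCommGrpCat X)
    {ι : Type*} (Ω : ι → Opens X) (hcov : iSup Ω = ⊤)
    (h : ∀ i, FlabbyOn F.val (Ω i)) : FlabbyOn F.val ⊤ :=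
  fun _ hU => TopCat.Presheaf.surjective_map_top_of_cover (F.obj ⋙ forget AddCommGrpCat)
    (Presheaf.isSheaf_comp_of_isSheaf _ _ _ F.property) Ω hcov h hU
end
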